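/- arXiv:2111.13745 — 9 statements merged into one kernel-verified Lean document; each statement's English description precedes it below -/
import Mathlib

section
/- For every integer p ≥ 2 and every integer n ≥ 1, the n-fold composition of g_p with itself equals g_{p^n}; that is, for all x ∈ [0,1], g_p iterated n times at x equals g_{p^n}(x). -/
/-- The continuous piecewise linear map `g_p : [0,1] → [0,1]` that goes up and down
`p` times: on `[k/p, (k+1)/p]` it is `x ↦ p·x − k` for `k` even and
`x ↦ k + 1 − p·x` for `k` odd. -/
noncomputable def gp (p : ℕ) (x : ℝ) : ℝ :=
  if Even ⌊(p : ℝ) * x⌋ then (p : ℝ) * x - ⌊(p : ℝ) * x⌋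
  else (⌊(p : ℝ) * x⌋ : ℝ) + 1 - (p : ℝ) * x

lemma gp_reflect (p : ℕ) (y : ℝ) :
    gp p (1 - y) = if Even p then gp p y else 1 - gp p y := by
  obtain ⟨b, hb⟩ : ∃ b : ℤ, ⌊(p : ℝ) * y⌋ = b := ⟨_, rfl⟩
  have h1 : (b : ℝ) ≤ (p : ℝ) * y := hb ▸ Int.floor_le _
  have h2 : (p : ℝ) * y < b + 1 := by
    have := Int.lt_floor_add_one ((p : ℝ) * y)
    rw [hb] at this; exact_mod_cast this
  have key : (p : ℝ) * (1 - y) = (p : ℝ) - (p : ℝ) * y := by ring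
  by_cases hc : (p : ℝ) * y = (b : ℝ)
  · have hfl : ⌊(p : ℝ) * (1 - y)⌋ = (p : ℤ) - b := by
      rw [key, hc, show ((p : ℝ) - (b : ℝ)) = (((p : ℤ) - b : ℤ) : ℝ) by push_cast; ring,
        Int.floor_intCast]
    rcases Int.even_or_odd b with hbE | hbO <;> rcases Nat.even_or_odd p with hpE | hpO
    · have hE : Even ((p : ℤ) - b) := by
        rcases hbE with ⟨i, hi⟩; rcases hpE with ⟨j, hj⟩
        exact ⟨(j : ℤ) - i, by push_cast [hi, hj]; ring⟩
      simp only [gp, hfl, hb, if_pos hE, if_pos hbE, if_pos hpE]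
      rw [key]
      push_cast; linarith
    · have hO : ¬ Even ((p : ℤ) - b) := by
        rcases hbE with ⟨i, hi⟩; rcases hpO with ⟨j, hj⟩
        rw [Int.not_even_iff_odd]
        exact ⟨(j : ℤ) - i, by push_cast [hi, hj]; ring⟩
      have hpO' : ¬ Even p := Nat.not_even_iff_odd.mpr hpO
      simp only [gp, hfl, hb, if_neg hO, if_pos hbE, if_neg hpO']
      rw [key]
      push_cast; linarith
    · have hbO' : ¬ Even b := Int.not_even_iff_odd.mpr hbO
      have hO : ¬ Even ((p : ℤ) - b) := by
        rcases hbO with ⟨i, hi⟩; rcases hpE with ⟨j, hj⟩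
        rw [Int.not_even_iff_odd]
        exact ⟨(j : ℤ) - i - 1, by push_cast [hi, hj]; ring⟩
      simp only [gp, hfl, hb, if_neg hO, if_neg hbO', if_pos hpE]
      rw [key]
      push_cast; linarith
    · have hbO' : ¬ Even b := Int.not_even_iff_odd.mpr hbO
      have hpO' : ¬ Even p := Nat.not_even_iff_odd.mpr hpO
      have hE : Even ((p : ℤ) - b) := by
        rcases hbO with ⟨i, hi⟩; rcases hpO with ⟨j, hj⟩
        exact ⟨(j : ℤ) - i, by push_cast [hi, hj]; ring⟩
      simp only [gp, hfl, hb, if_pos hE, if_neg hbO', if_neg hpO']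
      rw [key]
      push_cast; linarith
  · have h1' : (b : ℝ) < (p : ℝ) * y := lt_of_le_of_ne h1 (fun h => hc h.symm)
    have hfl : ⌊(p : ℝ) * (1 - y)⌋ = (p : ℤ) - b - 1 := by
      rw [key, Int.floor_eq_iff]
      push_cast
      constructor <;> linarith
    rcases Int.even_or_odd b with hbE | hbO <;> rcases Nat.even_or_odd p with hpE | hpO
    · have hO : ¬ Even ((p : ℤ) - b - 1) := by
        rcases hbE with ⟨i, hi⟩; rcases hpE with ⟨j, hj⟩
        rw [Int.not_even_iff_odd]
        exact ⟨(j : ℤ) - i - 1, by push_cast [hi, hj]; ring⟩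
      simp only [gp, hfl, hb, if_neg hO, if_pos hbE, if_pos hpE]
      rw [key]
      push_cast; ring
    · have hE : Even ((p : ℤ) - b - 1) := by
        rcases hbE with ⟨i, hi⟩; rcases hpO with ⟨j, hj⟩
        exact ⟨(j : ℤ) - i, by push_cast [hi, hj]; ring⟩
      have hpO' : ¬ Even p := Nat.not_even_iff_odd.mpr hpO
      simp only [gp, hfl, hb, if_pos hE, if_pos hbE, if_neg hpO']
      rw [key]
      push_cast; ring
    · have hbO' : ¬ Even b := Int.not_even_iff_odd.mpr hbO
      have hE : Even ((p : ℤ) - b - 1) := by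
        rcases hbO with ⟨i, hi⟩; rcases hpE with ⟨j, hj⟩
        exact ⟨(j : ℤ) - i - 1, by push_cast [hi, hj]; ring⟩
      simp only [gp, hfl, hb, if_pos hE, if_neg hbO', if_pos hpE]
      rw [key]
      push_cast; ring
    · have hbO' : ¬ Even b := Int.not_even_iff_odd.mpr hbO
      have hpO' : ¬ Even p := Nat.not_even_iff_odd.mpr hpO
      have hO : ¬ Even ((p : ℤ) - b - 1) := by
        rcases hbO with ⟨i, hi⟩; rcases hpO with ⟨j, hj⟩
        rw [Int.not_even_iff_odd]
        exact ⟨(j : ℤ) - i - 1, by push_cast [hi, hj]; ring⟩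
      simp only [gp, hfl, hb, if_neg hO, if_neg hbO', if_neg hpO']
      rw [key]
      push_cast; ring

lemma gp_comp (p q : ℕ) (x : ℝ) : gp p (gp q x) = gp (p * q) x := by
  obtain ⟨m, hm⟩ : ∃ m : ℤ, ⌊(q : ℝ) * x⌋ = m := ⟨_, rfl⟩
  obtain ⟨s, hs⟩ : ∃ s : ℤ, ⌊(p : ℝ) * ((q : ℝ) * x - (m : ℝ))⌋ = s := ⟨_, rfl⟩
  have hpq : ((p * q : ℕ) : ℝ) * x
      = (p : ℝ) * ((q : ℝ) * x - (m : ℝ)) + (((p : ℤ) * m : ℤ) : ℝ) := by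
    push_cast; ring
  have hfloor : ⌊((p * q : ℕ) : ℝ) * x⌋ = s + (p : ℤ) * m := by
    rw [hpq, Int.floor_add_intCast, hs]
  by_cases hmE : Even m
  · have hgq : gp q x = (q : ℝ) * x - (m : ℝ) := by
      simp only [gp, hm, if_pos hmE]
    have hpmE : Even ((p : ℤ) * m) := hmE.mul_left _
    rw [hgq]
    by_cases hsE : Even s
    · have hT : Even (s + (p : ℤ) * m) := hsE.add hpmE
      simp only [gp, hs, if_pos hsE, hfloor, if_pos hT]
      rw [hpq]; push_cast; ring
    · have hT : ¬ Even (s + (p : ℤ) * m) := by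
        rw [Int.even_add]; simp [hsE, hpmE]
      simp only [gp, hs, if_neg hsE, hfloor, if_neg hT]
      rw [hpq]; push_cast; ring
  · have hgq : gp q x = 1 - ((q : ℝ) * x - (m : ℝ)) := by
      simp only [gp, hm, if_neg hmE]; ring
    rw [hgq, gp_reflect]
    by_cases hpE : Even p
    · have hpmE : Even ((p : ℤ) * m) := ((Int.even_coe_nat p).mpr hpE).mul_right _
      rw [if_pos hpE]
      by_cases hsE : Even s
      · have hT : Even (s + (p : ℤ) * m) := hsE.add hpmE
        simp only [gp, hs, if_pos hsE, hfloor, if_pos hT]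
        rw [hpq]; push_cast; ring
      · have hT : ¬ Even (s + (p : ℤ) * m) := by
          rw [Int.even_add]; simp [hsE, hpmE]
        simp only [gp, hs, if_neg hsE, hfloor, if_neg hT]
        rw [hpq]; push_cast; ring
    · have hpmO : ¬ Even ((p : ℤ) * m) := by
        rw [Int.even_mul]
        push_neg
        exact ⟨fun h => hpE ((Int.even_coe_nat p).mp h), hmE⟩
      rw [if_neg hpE]
      by_cases hsE : Even s
      · have hT : ¬ Even (s + (p : ℤ) * m) := by
          rw [Int.even_add]; simp [hsE, hpmO]
        simp only [gp, hs, if_pos hsE, hfloor, if_neg hT]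
        rw [hpq]; push_cast; ring
      · have hT : Even (s + (p : ℤ) * m) := by
          rw [Int.even_add]; simp [hsE, hpmO]
        simp only [gp, hs, if_neg hsE, hfloor, if_pos hT]
        rw [hpq]; push_cast; ring

lemma gp_iterate_aux (p : ℕ) (x : ℝ) : ∀ k : ℕ, (gp p)^[k + 1] x = gp (p ^ (k + 1)) x := by
  intro k
  induction k with
  | zero => simp [pow_one]
  | succ k ih =>
    rw [Function.iterate_succ_apply', ih, gp_comp, ← pow_succ']

/-- For every integer `p ≥ 2` and `n ≥ 1`, the `n`-fold composition of `g_p` with itself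
equals `g_{p^n}` on `[0,1]`. -/
theorem iterate_gp_eq_gp_pow (p n : ℕ) (hp : 2 ≤ p) (hn : 1 ≤ n) :
    ∀ x ∈ Set.Icc (0 : ℝ) 1, (gp p)^[n] x = gp (p ^ n) x := by
  intro x _
  obtain ⟨k, rfl⟩ : ∃ k, n = k + 1 := ⟨n - 1, by omega⟩
  exact gp_iterate_aux p x k
end

section
/- Let p be a prime and m ≥ 1 an integer. The number of points x ∈ [0,1] that are periodic of order m for g_p (i.e., g_p^m(x) = x and g_p^i(x) ≠ x for all 1 ≤ i < m, where g_p^i denotes the i-fold iterate) equals m times the number of monic irreducible polynomials of degree m over the field ZMod p (equivalently, the number of roots of monic irreducible polynomials of degree m over F_p). -/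
open Function Polynomial

noncomputable def triangleWave (y : ℝ) : ℝ :=
  if Even ⌊y⌋ then y - ⌊y⌋ else ⌊y⌋ + 1 - y

theorem gp_apply (N : ℕ) (x : ℝ) : gp N x = triangleWave (N * x) := rfl

theorem triangleWave_eq_abs_sub {y : ℝ} {k : ℤ} (h : |y - 2 * k| ≤ 1) :
    triangleWave y = |y - 2 * k| := by
  obtain ⟨hlo, hhi⟩ := abs_le.mp h
  unfold triangleWave
  rcases lt_or_ge y (2 * k) with hy | hy
  · have hfl : ⌊y⌋ = 2 * k - 1 := by rw [Int.floor_eq_iff]; push_cast; constructor <;> linarith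
    rw [hfl, if_neg (by rw [Int.not_even_iff_odd]; exact ⟨k - 1, by ring⟩),
      abs_of_neg (by linarith)]
    push_cast; ring
  rcases lt_or_eq_of_le hhi with hy' | hy'
  · have hfl : ⌊y⌋ = 2 * k := by rw [Int.floor_eq_iff]; push_cast; constructor <;> linarith
    rw [hfl, if_pos (even_two_mul k), abs_of_nonneg (by linarith)]
    push_cast; ring
  · have hfl : ⌊y⌋ = 2 * k + 1 := by rw [Int.floor_eq_iff]; push_cast; constructor <;> linarith
    rw [hfl, if_neg (by rw [Int.not_even_iff_odd]; exact ⟨k, rfl⟩), hy', abs_one]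
    push_cast; linarith

theorem abs_sub_two_mul_round_half_le (y : ℝ) : |y - 2 * round (y / 2)| ≤ 1 := by
  have := abs_sub_round (y / 2)
  rw [show y - 2 * (round (y / 2) : ℝ) = 2 * (y / 2 - round (y / 2)) by ring, abs_mul]
  norm_num at this ⊢
  linarith

theorem triangleWave_eq (y : ℝ) : triangleWave y = |y - 2 * round (y / 2)| :=
  triangleWave_eq_abs_sub (abs_sub_two_mul_round_half_le y)

theorem triangleWave_abs_sub_two_mul (y : ℝ) (m : ℤ) :
    triangleWave |y - 2 * m| = triangleWave y := by
  have h := abs_sub_two_mul_round_half_le y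
  rw [triangleWave_eq y]
  rcases abs_cases (y - 2 * m) with ⟨hy, -⟩ | ⟨hy, -⟩
  · rw [hy, triangleWave_eq_abs_sub (k := round (y / 2) - m)]
    · push_cast; ring_nf
    · push_cast; ring_nf at h ⊢; assumption
  · rw [hy, triangleWave_eq_abs_sub (k := m - round (y / 2))]
    · rw [← abs_neg]; push_cast; ring_nf
    · rw [← abs_neg]; push_cast; ring_nf at h ⊢; assumption

theorem gp_mul (p q : ℕ) : gp (p * q) = gp p ∘ gp q := by
  ext x
  set k := round ((q : ℝ) * x / 2)
  have hscale :
      (p : ℝ) * |q * x - 2 * k| = |((p * q : ℕ) : ℝ) * x - 2 * ((p * k : ℤ) : ℝ)| := by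
    rw [← abs_of_nonneg (Nat.cast_nonneg (α := ℝ) p), ← abs_mul]; push_cast; ring_nf
  rw [comp_apply, gp_apply, gp_apply, gp_apply, triangleWave_eq (q * x), hscale,
    triangleWave_abs_sub_two_mul]

theorem gp_eq_self_iff {N : ℕ} {x : ℝ} (hx : x ≤ 1) :
    gp N x = x ↔ ∃ k : ℤ, |N * x - 2 * k| = x := by
  rw [gp_apply]
  refine ⟨fun h => ⟨_, (triangleWave_eq _).symm.trans h⟩, fun ⟨k, hk⟩ => ?_⟩
  rw [triangleWave_eq_abs_sub (hk.le.trans hx), hk]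

/-- The fixed point of `gp N` on its `k`-th lap `[k/N, (k+1)/N]`. -/
noncomputable def lapFixedPoint (N k : ℕ) : ℝ :=
  if Even k then k / (N - 1) else (k + 1) / (N + 1)

theorem lapFixedPoint_mem {N k : ℕ} (hN : 2 ≤ N) (hk : k < N) :
    lapFixedPoint N k ∈ {x ∈ Set.Icc (0 : ℝ) 1 | gp N x = x} := by
  have hN' : (2 : ℝ) ≤ N := by exact_mod_cast hN
  have hk' : (k : ℝ) + 1 ≤ N := by exact_mod_cast hk
  have hx1 : lapFixedPoint N k ≤ 1 := by
    unfold lapFixedPoint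
    split_ifs <;> rw [div_le_one (by linarith)] <;> linarith
  refine ⟨⟨by unfold lapFixedPoint; split_ifs <;> apply div_nonneg <;> linarith, hx1⟩,
    (gp_eq_self_iff hx1).mpr ?_⟩
  have hNm : (N : ℝ) - 1 ≠ 0 := by linarith
  have hNp : (N : ℝ) + 1 ≠ 0 := by linarith
  unfold lapFixedPoint at hx1 ⊢
  split_ifs at hx1 ⊢ with hke
  · obtain ⟨j, rfl⟩ := hke
    have hx : ((N : ℝ) - 1) * ((j + j : ℕ) / (N - 1)) = j + j := by
      push_cast; field_simp
    refine ⟨j, abs_of_nonneg ?_ |>.trans ?_⟩ <;> push_cast at hx ⊢ <;> nlinarith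
  · obtain ⟨j, rfl⟩ := Nat.not_even_iff_odd.mp hke
    have hx : ((N : ℝ) + 1) * (((2 * j + 1 : ℕ) + 1) / (N + 1)) = 2 * (j + 1) := by
      push_cast; field_simp; ring
    refine ⟨j + 1, abs_of_nonpos ?_ |>.trans ?_⟩ <;> push_cast at hx hx1 ⊢ <;> nlinarith

theorem lapFixedPoint_strictMonoOn {N : ℕ} (hN : 2 ≤ N) :
    StrictMonoOn (lapFixedPoint N) (Set.Iio N) := by
  refine strictMonoOn_of_lt_succ Set.ordConnected_Iio fun k _ _ hk => ?_
  have hN' : (2 : ℝ) ≤ N := by exact_mod_cast hN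
  have hk' : (k : ℝ) + 2 ≤ N := by
    rw [Set.mem_Iio, Order.succ_eq_add_one] at hk; exact_mod_cast hk
  simp only [lapFixedPoint, Order.succ_eq_add_one, Nat.even_add_one]
  split_ifs with hke
  · rw [div_lt_div_iff₀ (by linarith) (by linarith)]; push_cast; nlinarith
  · push_cast; exact div_lt_div_of_pos_left (by positivity) (by linarith) (by linarith)

theorem exists_lapFixedPoint_eq {N : ℕ} (hN : 2 ≤ N) {x : ℝ}
    (hx : x ∈ {x ∈ Set.Icc (0 : ℝ) 1 | gp N x = x}) : ∃ k < N, lapFixedPoint N k = x := by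
  obtain ⟨⟨hx0, hx1⟩, hfix⟩ := hx
  obtain ⟨j, hj⟩ := (gp_eq_self_iff hx1).mp hfix
  have hN' : (2 : ℝ) ≤ N := by exact_mod_cast hN
  have hj0 : 0 ≤ j := by
    have : (0 : ℝ) ≤ j := by cases abs_cases ((N : ℝ) * x - 2 * j) <;> nlinarith
    exact_mod_cast this
  lift j to ℕ using hj0
  push_cast at hj
  rcases abs_cases ((N : ℝ) * x - 2 * j) with ⟨habs, -⟩ | ⟨habs, -⟩
  · have hk : (2 * j : ℝ) + 1 ≤ N := by nlinarith
    refine ⟨2 * j, by exact_mod_cast hk, ?_⟩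
    rw [lapFixedPoint, if_pos (even_two_mul j), div_eq_iff (by linarith)]
    push_cast
    linarith
  · have hx : ((N : ℝ) + 1) * x = 2 * j := by linarith
    obtain _ | i := j
    · have hx0 : x = 0 := by push_cast at hx; nlinarith
      exact ⟨0, by omega, by simp [lapFixedPoint, hx0]⟩
    have hk : (2 * i : ℝ) + 1 ≤ N := by push_cast at hx; nlinarith
    rcases eq_or_lt_of_le hk with hk | hk
    · refine ⟨2 * i, by exact_mod_cast (by linarith : (2 * i : ℝ) < N), ?_⟩
      rw [lapFixedPoint, if_pos (even_two_mul i), div_eq_iff (by linarith)]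
      push_cast at hx ⊢
      nlinarith
    · refine ⟨2 * i + 1, by exact_mod_cast hk, ?_⟩
      rw [lapFixedPoint, if_neg (by simp), div_eq_iff (by linarith)]
      push_cast at hx ⊢
      linarith

theorem setOf_gp_eq_self {N : ℕ} (hN : 2 ≤ N) :
    {x ∈ Set.Icc (0 : ℝ) 1 | gp N x = x} = lapFixedPoint N '' Set.Iio N :=
  Set.Subset.antisymm (fun _ hx => exists_lapFixedPoint_eq hN hx)
    (Set.image_subset_iff.mpr fun _ hk => lapFixedPoint_mem hN hk)

theorem ncard_setOf_gp_eq_self {N : ℕ} (hN : 2 ≤ N) :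
    {x ∈ Set.Icc (0 : ℝ) 1 | gp N x = x}.ncard = N := by
  rw [setOf_gp_eq_self hN, (lapFixedPoint_strictMonoOn hN).injOn.ncard_image, Set.ncard_Iio_nat]

theorem finite_setOf_gp_eq_self {N : ℕ} (hN : 2 ≤ N) :
    {x ∈ Set.Icc (0 : ℝ) 1 | gp N x = x}.Finite := by
  rw [setOf_gp_eq_self hN]
  exact (Set.finite_Iio N).image _

theorem gp_iterate (p : ℕ) {n : ℕ} (hn : n ≠ 0) : (gp p)^[n] = gp (p ^ n) := by
  induction n with
  | zero => exact absurd rfl hn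
  | succ n ih =>
    rcases eq_or_ne n 0 with rfl | hn'
    · simp
    · rw [iterate_succ', ih hn', pow_succ', gp_mul]

theorem Function.minimalPeriod_eq_iff {α : Type*} {f : α → α} {x : α} {n : ℕ}
    (hn : n ≠ 0) :
    minimalPeriod f x = n ↔ f^[n] x = x ∧ ∀ i, 1 ≤ i → i < n → f^[i] x ≠ x := by
  constructor
  · rintro rfl
    exact ⟨iterate_minimalPeriod, fun i hi hlt =>
      not_isPeriodicPt_of_pos_of_lt_minimalPeriod (Nat.one_le_iff_ne_zero.mp hi) hlt⟩
  · rintro ⟨hfix, hmin⟩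
    refine le_antisymm (IsPeriodicPt.minimalPeriod_le (Nat.pos_of_ne_zero hn) hfix) ?_
    by_contra! hlt
    exact hmin _ (IsPeriodicPt.minimalPeriod_pos (Nat.pos_of_ne_zero hn) hfix) hlt
      iterate_minimalPeriod

theorem Function.sum_ncard_minimalPeriod_eq {α : Type*} (f : α → α) (s : Set α) {n : ℕ}
    (hn : n ≠ 0) (hs : {x ∈ s | IsPeriodicPt f n x}.Finite) :
    ∑ d ∈ n.divisors, {x ∈ s | minimalPeriod f x = d}.ncard =
      {x ∈ s | IsPeriodicPt f n x}.ncard := by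
  classical
  have hfiber : ∀ d ∈ n.divisors,
      {x ∈ s | minimalPeriod f x = d} = ↑(hs.toFinset.filter (minimalPeriod f · = d)) := by
    intro d hd
    ext x
    simp only [Set.mem_ofPred_eq, Finset.coe_filter, Set.Finite.mem_toFinset]
    refine ⟨fun ⟨hx, hper⟩ => ⟨⟨hx, ?_⟩, hper⟩, fun ⟨⟨hx, _⟩, hper⟩ => ⟨hx, hper⟩⟩
    exact isPeriodicPt_iff_minimalPeriod_dvd.mpr (hper ▸ Nat.dvd_of_mem_divisors hd)
  rw [Finset.sum_congr rfl fun d hd => by rw [hfiber d hd, Set.ncard_coe_finset],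
    ← Finset.card_eq_sum_card_fiberwise, Set.ncard_eq_toFinset_card _ hs]
  intro x hx
  exact Nat.mem_divisors.mpr ⟨((hs.mem_toFinset.mp hx).2).minimalPeriod_dvd, hn⟩

theorem Nat.eq_of_sum_divisors_eq {f g : ℕ → ℕ}
    (h : ∀ n > 0, ∑ d ∈ n.divisors, f d = ∑ d ∈ n.divisors, g d) {n : ℕ} (hn : 0 < n) :
    f n = g n := by
  have hf := (ArithmeticFunction.sum_eq_iff_sum_smul_moebius_eq (f := fun d => (f d : ℤ))).mp
    (fun _ _ => rfl)
  have hg := (ArithmeticFunction.sum_eq_iff_sum_smul_moebius_eq (f := fun d => (g d : ℤ))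
    (g := fun n => ∑ d ∈ n.divisors, (f d : ℤ))).mp fun n hn => by
      exact_mod_cast (h n hn).symm
  exact_mod_cast (hf n hn).symm.trans (hg n hn)

theorem ncard_setOf_minpoly_eq {F L : Type*} [Field F] [Field L] [Algebra F L] [Finite L]
    {f : F[X]} (hmon : f.Monic) (hirr : Irreducible f)
    (hdvd : f.natDegree ∣ Module.finrank F L) :
    {x : L | minpoly F x = f}.ncard = f.natDegree := by
  have := Fact.mk hirr
  have hroots : {x : L | minpoly F x = f} = {x | x ∈ f.aroots L} := by
    ext x
    rw [Set.mem_ofPred_eq, Set.mem_ofPred_eq, mem_aroots]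
    refine ⟨?_, fun ⟨_, hx⟩ => (minpoly.eq_of_irreducible_of_monic hirr hx hmon).symm⟩
    rintro rfl
    exact ⟨hmon.ne_zero, minpoly.aeval F x⟩
  have hrank : Module.finrank F (AdjoinRoot f) = f.natDegree :=
    finrank_quotient_span_eq_natDegree
  rw [hroots, ← Nat.card_coe_set_eq, ← hrank,
    ← FiniteField.natCard_algHom_of_finrank_dvd (hrank ▸ hdvd)]
  exact (Nat.card_congr (AdjoinRoot.equiv L F f hirr.ne_zero)).symm

theorem sum_divisors_mul_ncard_irreducible (F L : Type*) [Field F] [Field L] [Algebra F L]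
    [Finite L] :
    ∑ d ∈ (Module.finrank F L).divisors,
      d * {f : F[X] | f.Monic ∧ Irreducible f ∧ f.natDegree = d}.ncard = Nat.card L := by
  classical
  have := Fintype.ofFinite L
  have := Finite.of_injective _ (algebraMap F L).injective
  have := Module.finite_of_finite F (M := L)
  have hn : Module.finrank F L ≠ 0 := Module.finrank_pos.ne'
  set T := Finset.univ.image (minpoly F : L → F[X])
  have hfiber :
      ∀ f ∈ T, (Finset.univ.filter fun x : L => minpoly F x = f).card = f.natDegree := by
    intro f hf
    obtain ⟨x, -, rfl⟩ := Finset.mem_image.mp hf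
    rw [← ncard_setOf_minpoly_eq (minpoly.monic (.of_finite F x))
      (minpoly.irreducible (.of_finite F x)) (minpoly.degree_dvd (.of_finite F x)),
      ← Set.ncard_coe_finset, Finset.coe_filter_univ]
  have hT : ∀ d ∈ (Module.finrank F L).divisors,
      {f : F[X] | f.Monic ∧ Irreducible f ∧ f.natDegree = d} =
        ↑(T.filter (·.natDegree = d)) := by
    intro d hd
    ext f
    simp only [Set.mem_ofPred_eq, Finset.coe_filter, T, Finset.mem_image, Finset.mem_univ,
      true_and]
    constructor
    · rintro ⟨hmon, hirr, rfl⟩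
      obtain ⟨x, hx⟩ := Set.nonempty_of_ncard_ne_zero <| by
        rw [ncard_setOf_minpoly_eq hmon hirr (Nat.dvd_of_mem_divisors hd)]
        exact Nat.ne_of_gt (Nat.pos_of_mem_divisors hd)
      exact ⟨⟨x, hx⟩, rfl⟩
    · rintro ⟨⟨x, rfl⟩, rfl⟩
      exact ⟨minpoly.monic (.of_finite F x), minpoly.irreducible (.of_finite F x), rfl⟩
  calc ∑ d ∈ (Module.finrank F L).divisors,
        d * {f : F[X] | f.Monic ∧ Irreducible f ∧ f.natDegree = d}.ncard
      = ∑ d ∈ (Module.finrank F L).divisors,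
          ∑ f ∈ T.filter (·.natDegree = d), f.natDegree := by
        refine Finset.sum_congr rfl fun d hd => ?_
        rw [hT d hd, Set.ncard_coe_finset,
          Finset.sum_const_nat fun f hf => (Finset.mem_filter.mp hf).2, mul_comm]
    _ = ∑ f ∈ T, f.natDegree := by
        refine Finset.sum_fiberwise_of_maps_to (fun f hf => ?_) _
        obtain ⟨x, -, rfl⟩ := Finset.mem_image.mp hf
        exact Nat.mem_divisors.mpr ⟨minpoly.degree_dvd (.of_finite F x), hn⟩
    _ = ∑ f ∈ T, (Finset.univ.filter fun x : L => minpoly F x = f).card :=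
        (Finset.sum_congr rfl hfiber).symm
    _ = Nat.card L := by
        rw [← Finset.card_eq_sum_card_image, Finset.card_univ, Nat.card_eq_fintype_card]

/-- The number of points of `[0,1]` that are periodic of order `m` for `g_p` equals
`m` times the number of monic irreducible polynomials of degree `m` over `F_p`. -/
theorem card_periodic_eq_mul_card_irreducible (p m : ℕ) (hp : p.Prime) (hm : 1 ≤ m) :
    {x ∈ Set.Icc (0 : ℝ) 1 |
        (gp p)^[m] x = x ∧ ∀ i, 1 ≤ i → i < m → (gp p)^[i] x ≠ x}.ncard
      = m * {f : Polynomial (ZMod p) | f.Monic ∧ Irreducible f ∧ f.natDegree = m}.ncard := by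
  have := Fact.mk hp
  have hperiodic : ∀ n ≠ 0, {x ∈ Set.Icc (0 : ℝ) 1 | IsPeriodicPt (gp p) n x} =
      {x ∈ Set.Icc (0 : ℝ) 1 | gp (p ^ n) x = x} := fun n hn => by
    simp only [IsPeriodicPt, IsFixedPt, gp_iterate p hn]
  have hsum : ∀ n > 0,
      ∑ d ∈ n.divisors, {x ∈ Set.Icc (0 : ℝ) 1 | minimalPeriod (gp p) x = d}.ncard =
        ∑ d ∈ n.divisors,
          d * {f : Polynomial (ZMod p) | f.Monic ∧ Irreducible f ∧ f.natDegree = d}.ncard := by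
    intro n hn
    have hpn : 2 ≤ p ^ n := Nat.one_lt_pow hn.ne' hp.one_lt
    rw [sum_ncard_minimalPeriod_eq _ _ hn.ne'
        (hperiodic n hn.ne' ▸ finite_setOf_gp_eq_self hpn),
      hperiodic n hn.ne', ncard_setOf_gp_eq_self hpn, ← GaloisField.card p n hn.ne',
      ← sum_divisors_mul_ncard_irreducible (ZMod p) (GaloisField p n),
      GaloisField.finrank p hn.ne']
  calc _ = {x ∈ Set.Icc (0 : ℝ) 1 | minimalPeriod (gp p) x = m}.ncard := by
        simp_rw [minimalPeriod_eq_iff (Nat.one_le_iff_ne_zero.mp hm)]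
    _ = _ := Nat.eq_of_sum_divisors_eq hsum hm
end

section
/- Let p ≥ 2 be an integer, let (a_i)_{i≥1} be a sequence with 0 ≤ a_i ≤ p−1, and let x = ∑_{i≥1} a_i·p^{−i}. Then g_p(x) = ∑_{i≥1} a_{i+1}·p^{−i} if a_1 is even, and g_p(x) = ∑_{i≥1} (p − 1 − a_{i+1})·p^{−i} if a_1 is odd. -/
/-
Write `x = 0.a₁a₂a₃…` in base `p` and `y = 0.a₂a₃…`. Then `p·x = a₁ + y` with `0 ≤ y ≤ 1`, so on
the lap of `g_p` containing `x` the map reads `y` or `1 − y` according to the parity of `a₁` (when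
`y = 1` the floor is `a₁ + 1`, but the value at that lap end is the same). Finally `1 − y` is the
expansion with complemented digits `p − 1 − aᵢ`, since the digits `p − 1` sum to `1`.
-/

open Real

lemma gp_of_mul_eq_intCast_add {p : ℕ} {x t : ℝ} {n : ℤ} (h : p * x = n + t)
    (ht : t ∈ Set.Icc 0 1) : gp p x = if Even n then t else 1 - t := by
  rcases ht.2.lt_or_eq with ht1 | rfl
  · have hfloor : ⌊(p : ℝ) * x⌋ = n := by
      rw [Int.floor_eq_iff, h]; constructor <;> linarith [ht.1]
    rw [gp, hfloor]
    split_ifs <;> linarith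
  · -- at the right end point the floor jumps to `n + 1`, flipping the parity
    have hfloor : ⌊(p : ℝ) * x⌋ = n + 1 := by rw [h]; exact_mod_cast Int.floor_intCast (n + 1)
    simp only [gp, hfloor, Int.even_add_one]
    split_ifs <;> push_cast <;> linarith

namespace Real

theorem ofDigits_eq_tsum_div {b : ℕ} (f : ℕ → ℕ) (hf : ∀ i, f i < b) :
    ofDigits (fun i ↦ (⟨f i, hf i⟩ : Fin b)) = ∑' i, (f i : ℝ) / (b : ℝ) ^ (i + 1) := by
  simp [ofDigits, ofDigitsTerm, div_eq_mul_inv]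

theorem natCast_mul_ofDigits {b : ℕ} (d : ℕ → Fin b) :
    b * ofDigits d = d 0 + ofDigits (fun i ↦ d (i + 1)) := by
  have hb : (b : ℝ) ≠ 0 := by exact_mod_cast (Fin.pos (d 0)).ne'
  rw [ofDigits_eq_sum_add_ofDigits d 1]
  simp [ofDigitsTerm]
  field_simp

theorem ofDigits_rev {b : ℕ} (hb : 1 < b) (d : ℕ → Fin b) :
    ofDigits (fun i ↦ (d i).rev) = 1 - ofDigits d := by
  rw [eq_sub_iff_add_eq, ← ofDigits_const_last_eq_one' hb, ofDigits, ofDigits, ofDigits,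
    ← Summable.tsum_add summable_ofDigitsTerm summable_ofDigitsTerm]
  refine tsum_congr fun i ↦ ?_
  have h := (d i).isLt
  have : (d i).rev.val + (d i).val = b - 1 := by simp [Fin.val_rev]; omega
  simp only [ofDigitsTerm, ← add_mul]
  exact_mod_cast congrArg (fun n : ℕ ↦ (n : ℝ) * ((b : ℝ) ^ (i + 1))⁻¹) this

end Real

/-- The action of `g_p` on base-`p` expansions: if `x = ∑_{i≥1} a_i·p^{−i}` with
`0 ≤ a_i ≤ p − 1`, then `g_p(x) = ∑_{i≥1} a_{i+1}·p^{−i}` if `a_1` is even, and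
`g_p(x) = ∑_{i≥1} (p − 1 − a_{i+1})·p^{−i}` if `a_1` is odd. -/
theorem gp_basep_expansion (p : ℕ) (hp : 2 ≤ p)
    (a : ℕ → ℕ) (ha : ∀ i, 1 ≤ i → a i < p)
    (x : ℝ) (hx : x = ∑' i : ℕ, (a (i + 1) : ℝ) / (p : ℝ) ^ (i + 1)) :
    (Even (a 1) → gp p x = ∑' i : ℕ, (a (i + 2) : ℝ) / (p : ℝ) ^ (i + 1)) ∧
    (Odd (a 1) → gp p x = ∑' i : ℕ, ((p - 1 - a (i + 2) : ℕ) : ℝ) / (p : ℝ) ^ (i + 1)) := by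
  set d : ℕ → Fin p := fun i ↦ ⟨a (i + 1), ha (i + 1) (by omega)⟩
  set y := ofDigits fun i ↦ d (i + 1)
  have hxd : x = ofDigits d := by rw [hx, ofDigits_eq_tsum_div]
  have hy : ∑' i : ℕ, (a (i + 2) : ℝ) / (p : ℝ) ^ (i + 1) = y :=
    (ofDigits_eq_tsum_div (fun i ↦ a (i + 2)) fun i ↦ ha (i + 2) (by omega)).symm
  have hy_rev : ∑' i : ℕ, ((p - 1 - a (i + 2) : ℕ) : ℝ) / (p : ℝ) ^ (i + 1) = 1 - y := by
    rw [← ofDigits_rev (by omega : 1 < p), ← ofDigits_eq_tsum_div _ fun i ↦ by omega]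
    congr with i
    simp only [d, Fin.val_rev]
    grind
  have hgp : gp p x = if Even (a 1 : ℤ) then y else 1 - y :=
    gp_of_mul_eq_intCast_add (by rw [hxd, natCast_mul_ofDigits]; simp [d, y])
      ⟨ofDigits_nonneg _, ofDigits_le_one _⟩
  refine ⟨fun h ↦ ?_, fun h ↦ ?_⟩
  · rw [hgp, if_pos (by exact_mod_cast h), hy]
  · rw [hgp, if_neg (by simpa [Int.even_coe_nat] using h), hy_rev]
end

section
/- Let p ≥ 2 and n ≥ 1 be integers, and let 0 ≤ k < p^n have base-p digits k = a_1·p^{n−1} + a_2·p^{n−2} + ... + a_n with 0 ≤ a_i ≤ p−1. Then π_{p^n}(k) = b_1·p^{n−1} + b_2·p^{n−2} + ... + b_n, where b_1 = a_1 and, for 2 ≤ i ≤ n, b_i = a_i if b_1 + ... + b_{i−1} is even and b_i = p − 1 − a_i if b_1 + ... + b_{i−1} is odd. -/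
/-- The permutation `π_{p^n}` of `{0, …, p^n − 1}`: `π_{p^1}` is the identity, and for
`a·p^{n−1} ≤ k < (a+1)·p^{n−1}`, `π_{p^n}(k) = a·p^{n−1} + π_{p^{n−1}}(k − a·p^{n−1})`
if `a` is even, and `π_{p^n}(k) = a·p^{n−1} + π_{p^{n−1}}(p^{n−1} − (k − a·p^{n−1}) − 1)`
if `a` is odd. -/
def piPow (p : ℕ) : ℕ → ℕ → ℕ
  | 0, k => k
  | n + 1, k =>
    if Even (k / p ^ n) then k / p ^ n * p ^ n + piPow p n (k % p ^ n)
    else k / p ^ n * p ^ n + piPow p n (p ^ n - k % p ^ n - 1)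

lemma piPow_succ (p n k : ℕ) : piPow p (n + 1) k =
    if Even (k / p ^ n) then k / p ^ n * p ^ n + piPow p n (k % p ^ n)
    else k / p ^ n * p ^ n + piPow p n (p ^ n - k % p ^ n - 1) := rfl

lemma sum_const_digits (p : ℕ) (hp : 1 ≤ p) :
    ∀ n, ∑ i ∈ Finset.range (n + 1), (p - 1) * p ^ (n - i) = p ^ (n + 1) - 1 := by
  intro n
  induction n with
  | zero => simp
  | succ n ih =>
    rw [Finset.sum_range_succ']
    simp only [Nat.succ_sub_succ_eq_sub, Nat.sub_zero]
    rw [ih]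
    have h1 : 1 ≤ p ^ (n + 1) := Nat.one_le_pow _ _ (by omega)
    have h2 : p ^ (n + 2) = p * p ^ (n + 1) := by ring
    have h3 : (p - 1) * p ^ (n + 1) = p * p ^ (n + 1) - p ^ (n + 1) := by
      rw [Nat.sub_mul, one_mul]
    have h4 : p ^ (n + 1) ≤ p * p ^ (n + 1) := Nat.le_mul_of_pos_left _ (by omega)
    rw [h2, h3]
    omega

lemma digits_lt (p : ℕ) (hp : 2 ≤ p) :
    ∀ n (a : ℕ → ℕ), (∀ i ≤ n, a i < p) →
      ∑ i ∈ Finset.range (n + 1), a i * p ^ (n - i) < p ^ (n + 1) := by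
  intro n
  induction n with
  | zero => intro a ha; simpa using ha 0 (le_refl 0)
  | succ n ih =>
    intro a ha
    rw [Finset.sum_range_succ']
    simp only [Nat.succ_sub_succ_eq_sub, Nat.sub_zero]
    have hT : ∑ i ∈ Finset.range (n + 1), a (i + 1) * p ^ (n - i) < p ^ (n + 1) :=
      ih (fun i => a (i + 1)) (fun i hi => ha (i + 1) (by omega))
    have ha0 : a 0 < p := ha 0 (by omega)
    calc ∑ i ∈ Finset.range (n + 1), a (i + 1) * p ^ (n - i) + a 0 * p ^ (n + 1)
        < p ^ (n + 1) + a 0 * p ^ (n + 1) := by omega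
      _ = (a 0 + 1) * p ^ (n + 1) := by ring
      _ ≤ p * p ^ (n + 1) := Nat.mul_le_mul_right _ (by omega)
      _ = p ^ (n + 2) := by ring

lemma digits_complement (p : ℕ) (hp : 2 ≤ p) (n : ℕ) (a : ℕ → ℕ) (ha : ∀ i ≤ n, a i < p) :
    p ^ (n + 1) - (∑ i ∈ Finset.range (n + 1), a i * p ^ (n - i)) - 1
      = ∑ i ∈ Finset.range (n + 1), (p - 1 - a i) * p ^ (n - i) := by
  have h1 : ∑ i ∈ Finset.range (n + 1), a i * p ^ (n - i)
      + ∑ i ∈ Finset.range (n + 1), (p - 1 - a i) * p ^ (n - i)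
      = ∑ i ∈ Finset.range (n + 1), (p - 1) * p ^ (n - i) := by
    rw [← Finset.sum_add_distrib]
    apply Finset.sum_congr rfl
    intro i hi
    rw [← Nat.add_mul]
    congr 1
    have := ha i (Nat.lt_succ_iff.mp (Finset.mem_range.mp hi))
    omega
  have h2 := sum_const_digits p (by omega) n
  have h3 := digits_lt p hp n a ha
  omega

theorem piPow_aux (p : ℕ) (hp : 2 ≤ p) :
    ∀ (n : ℕ) (a b : ℕ → ℕ), (∀ i ≤ n, a i < p) → b 0 = a 0 →
      (∀ i, 1 ≤ i → i ≤ n →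
        b i = if Even (∑ j ∈ Finset.range i, b j) then a i else p - 1 - a i) →
      piPow p (n + 1) (∑ i ∈ Finset.range (n + 1), a i * p ^ (n - i))
        = ∑ i ∈ Finset.range (n + 1), b i * p ^ (n - i) := by
  intro n
  induction n with
  | zero =>
    intro a b ha hb0 hb
    simp [piPow, hb0, Nat.mod_one]
  | succ n ih =>
    intro a b ha hb0 hb
    have hsum : ∑ i ∈ Finset.range (n + 1 + 1), a i * p ^ (n + 1 - i)
        = a 0 * p ^ (n + 1) + ∑ i ∈ Finset.range (n + 1), a (i + 1) * p ^ (n - i) := by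
      rw [Finset.sum_range_succ']
      simp only [Nat.succ_sub_succ_eq_sub, Nat.sub_zero]
      exact Nat.add_comm _ _
    have hbsum : ∑ i ∈ Finset.range (n + 1 + 1), b i * p ^ (n + 1 - i)
        = b 0 * p ^ (n + 1) + ∑ i ∈ Finset.range (n + 1), b (i + 1) * p ^ (n - i) := by
      rw [Finset.sum_range_succ']
      simp only [Nat.succ_sub_succ_eq_sub, Nat.sub_zero]
      exact Nat.add_comm _ _
    have ha' : ∀ i ≤ n, a (i + 1) < p := fun i hi => ha (i + 1) (by omega)
    have hTlt : ∑ i ∈ Finset.range (n + 1), a (i + 1) * p ^ (n - i) < p ^ (n + 1) :=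
      digits_lt p hp n (fun i => a (i + 1)) ha'
    have hpow : 0 < p ^ (n + 1) := pow_pos (by omega) _
    have hdiv : (a 0 * p ^ (n + 1) + ∑ i ∈ Finset.range (n + 1), a (i + 1) * p ^ (n - i))
        / p ^ (n + 1) = a 0 := by
      rw [mul_comm, Nat.mul_add_div hpow, Nat.div_eq_of_lt hTlt, add_zero]
    have hmod : (a 0 * p ^ (n + 1) + ∑ i ∈ Finset.range (n + 1), a (i + 1) * p ^ (n - i))
        % p ^ (n + 1) = ∑ i ∈ Finset.range (n + 1), a (i + 1) * p ^ (n - i) := by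
      rw [mul_comm, Nat.mul_add_mod, Nat.mod_eq_of_lt hTlt]
    rw [hsum, hbsum, piPow_succ, hdiv, hmod, hb0]
    rcases Nat.even_or_odd (a 0) with he | ho
    · rw [if_pos he]
      congr 1
      have hb0' : b 1 = a 1 := by
        have h := hb 1 (by omega) (by omega)
        rw [Finset.sum_range_one, hb0, if_pos he] at h
        exact h
      have hb' : ∀ i, 1 ≤ i → i ≤ n → b (i + 1) =
          if Even (∑ j ∈ Finset.range i, b (j + 1)) then a (i + 1) else p - 1 - a (i + 1) := by
        intro i h1 h2
        have h := hb (i + 1) (by omega) (by omega)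
        rw [Finset.sum_range_succ'] at h
        have hpar : Even (∑ j ∈ Finset.range i, b (j + 1) + b 0)
            ↔ Even (∑ j ∈ Finset.range i, b (j + 1)) := by
          rw [Nat.even_add, hb0]
          simp [he]
        rw [h]
        exact if_congr hpar rfl rfl
      exact ih (fun i => a (i + 1)) (fun i => b (i + 1)) ha' hb0' hb'
    · have hb0odd : ¬ Even (b 0) := by
        rw [hb0]; exact Nat.not_even_iff_odd.mpr ho
      rw [if_neg (Nat.not_even_iff_odd.mpr ho)]
      have hcomp : p ^ (n + 1) - (∑ i ∈ Finset.range (n + 1), a (i + 1) * p ^ (n - i)) - 1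
          = ∑ i ∈ Finset.range (n + 1), (p - 1 - a (i + 1)) * p ^ (n - i) :=
        digits_complement p hp n (fun i => a (i + 1)) ha'
      rw [hcomp]
      congr 1
      have hb0' : b 1 = p - 1 - a 1 := by
        have h := hb 1 (by omega) (by omega)
        rw [Finset.sum_range_one, if_neg hb0odd] at h
        exact h
      have hb' : ∀ i, 1 ≤ i → i ≤ n → b (i + 1) =
          if Even (∑ j ∈ Finset.range i, b (j + 1)) then p - 1 - a (i + 1)
          else p - 1 - (p - 1 - a (i + 1)) := by
        intro i h1 h2
        have h := hb (i + 1) (by omega) (by omega)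
        rw [Finset.sum_range_succ'] at h
        by_cases hs : Even (∑ j ∈ Finset.range i, b (j + 1))
        · rw [if_neg (by rw [Nat.even_add]; simp [hs, hb0odd])] at h
          rw [if_pos hs]
          exact h
        · rw [if_pos (by rw [Nat.even_add]; simp [hs, hb0odd])] at h
          rw [if_neg hs, h]
          have := ha (i + 1) (by omega)
          omega
      have ha'' : ∀ i ≤ n, p - 1 - a (i + 1) < p := fun i hi => by
        have := ha' i hi; omega
      exact ih (fun i => p - 1 - a (i + 1)) (fun i => b (i + 1)) ha'' hb0' hb'

/-- Base-`p` description of `π_{p^n}`: if `k = a_1·p^{n−1} + ⋯ + a_n` with digits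
`0 ≤ a_i ≤ p − 1`, then `π_{p^n}(k) = b_1·p^{n−1} + ⋯ + b_n` where `b_1 = a_1` and, for
`2 ≤ i ≤ n`, `b_i = a_i` if `b_1 + ⋯ + b_{i−1}` is even and `b_i = p − 1 − a_i` if
`b_1 + ⋯ + b_{i−1}` is odd. -/
theorem piPow_basep (p n : ℕ) (hp : 2 ≤ p) (hn : 1 ≤ n)
    (a b : ℕ → ℕ) (ha : ∀ i, 1 ≤ i → i ≤ n → a i < p)
    (k : ℕ) (hk : k = ∑ i ∈ Finset.Icc 1 n, a i * p ^ (n - i))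
    (hb1 : b 1 = a 1)
    (hb : ∀ i, 2 ≤ i → i ≤ n →
      b i = if Even (∑ j ∈ Finset.Icc 1 (i - 1), b j) then a i else p - 1 - a i) :
    piPow p n k = ∑ i ∈ Finset.Icc 1 n, b i * p ^ (n - i) := by
  obtain ⟨m, rfl⟩ : ∃ m, n = m + 1 := ⟨n - 1, by omega⟩
  subst hk
  have hicc : ∀ f : ℕ → ℕ, ∑ i ∈ Finset.Icc 1 (m + 1), f i * p ^ (m + 1 - i)
      = ∑ i ∈ Finset.range (m + 1), f (i + 1) * p ^ (m - i) := by
    intro f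
    rw [← Finset.Ico_add_one_right_eq_Icc, Finset.sum_Ico_eq_sum_range]
    try simp only [Nat.add_sub_cancel]
    apply Finset.sum_congr rfl
    intro i hi
    congr 1
    · rw [Nat.add_comm]
    · congr 1
      omega
  rw [hicc a, hicc b]
  refine piPow_aux p hp m (fun i => a (i + 1)) (fun i => b (i + 1))
    (fun i hi => ha (i + 1) (by omega) (by omega)) hb1 ?_
  intro i h1 h2
  have h := hb (i + 1) (by omega) (by omega)
  rw [Nat.add_sub_cancel] at h
  have hs : ∑ j ∈ Finset.Icc 1 i, b j = ∑ j ∈ Finset.range i, b (j + 1) := by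
    rw [← Finset.Ico_add_one_right_eq_Icc, Finset.sum_Ico_eq_sum_range]
    try simp only [Nat.add_sub_cancel]
    exact Finset.sum_congr rfl fun j _ => by rw [Nat.add_comm]
  rw [hs] at h
  exact h
end

section
/- Let n ≥ 1 and let 0 ≤ k < 2^n have binary digits k = a_1·2^{n−1} + a_2·2^{n−2} + ... + a_n with a_i ∈ {0,1}. Then π_{2^n}(k) = b_1·2^{n−1} + b_2·2^{n−2} + ... + b_n, where b_1 = a_1 and, for 2 ≤ i ≤ n, b_i = 0 if a_{i−1} = a_i and b_i = 1 otherwise. -/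
def digitsValue (p n : ℕ) (a : ℕ → ℕ) : ℕ := ∑ i ∈ Finset.Icc 1 n, a i * p ^ (n - i)

@[simp]
theorem digitsValue_zero (p : ℕ) (a : ℕ → ℕ) : digitsValue p 0 a = 0 := rfl

theorem digitsValue_succ (p n : ℕ) (a : ℕ → ℕ) :
    digitsValue p (n + 1) a = a 1 * p ^ n + digitsValue p n (fun i => a (i + 1)) := by
  rw [digitsValue, digitsValue, ← Finset.Ico_add_one_right_eq_Icc,
    Finset.sum_eq_sum_Ico_succ_bot (by omega), ← Finset.Ico_add_one_right_eq_Icc,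
    ← Finset.sum_Ico_add']
  simp

theorem digitsValue_lt {p n : ℕ} {a : ℕ → ℕ} (ha : ∀ i, 1 ≤ i → i ≤ n → a i < p) :
    digitsValue p n a < p ^ n := by
  induction n generalizing a with
  | zero => simp
  | succ n ih =>
    have hrest := ih (a := fun i => a (i + 1)) fun i hi hin => ha (i + 1) (by omega) (by omega)
    calc digitsValue p (n + 1) a = a 1 * p ^ n + digitsValue p n (fun i => a (i + 1)) :=
          digitsValue_succ p n a
      _ < (a 1 + 1) * p ^ n := by linarith
      _ ≤ p ^ (n + 1) := by
          rw [pow_succ']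
          exact Nat.mul_le_mul_right _ (ha 1 le_rfl (by omega))

theorem digitsValue_add_digitsValue_complement {p n : ℕ} {a : ℕ → ℕ}
    (ha : ∀ i, 1 ≤ i → i ≤ n → a i < p) :
    digitsValue p n a + digitsValue p n (fun i => p - 1 - a i) = p ^ n - 1 := by
  induction n generalizing a with
  | zero => simp
  | succ n ih =>
    have hrest := ih (a := fun i => a (i + 1)) fun i hi hin => ha (i + 1) (by omega) (by omega)
    have ha1 := ha 1 le_rfl (by omega)
    have hpos : 1 ≤ p ^ n := Nat.one_le_pow _ _ (by omega)
    rw [digitsValue_succ, digitsValue_succ, pow_succ']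
    have hlead : a 1 * p ^ n + (p - 1 - a 1) * p ^ n = p * p ^ n - p ^ n := by
      rw [← add_mul, show a 1 + (p - 1 - a 1) = p - 1 by omega, Nat.sub_one_mul]
    have hle : p ^ n ≤ p * p ^ n := Nat.le_mul_of_pos_left _ (by omega)
    omega

theorem digitsValue_complement {p n : ℕ} {a : ℕ → ℕ} (ha : ∀ i, 1 ≤ i → i ≤ n → a i < p) :
    digitsValue p n (fun i => p - 1 - a i) = p ^ n - digitsValue p n a - 1 := by
  have := digitsValue_add_digitsValue_complement ha
  omega

theorem piPow_succ_mul_add {p n m : ℕ} (d : ℕ) (hm : m < p ^ n) :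
    piPow p (n + 1) (d * p ^ n + m) =
      d * p ^ n + piPow p n (if Even d then m else p ^ n - m - 1) := by
  have hpos : 0 < p ^ n := by omega
  have hdiv : (d * p ^ n + m) / p ^ n = d := by
    rw [add_comm, Nat.add_mul_div_right _ _ hpos, Nat.div_eq_of_lt hm, zero_add]
  have hmod : (d * p ^ n + m) % p ^ n = m := by
    rw [add_comm, Nat.add_mul_mod_self_right, Nat.mod_eq_of_lt hm]
  rw [piPow, hdiv, hmod]
  split_ifs <;> rfl

theorem piPow_two_digitsValue (n : ℕ) (a b : ℕ → ℕ) (ha : ∀ i, 1 ≤ i → i ≤ n → a i < 2)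
    (hb1 : b 1 = a 1) (hb : ∀ i, 2 ≤ i → i ≤ n → b i = if a (i - 1) = a i then 0 else 1) :
    piPow 2 n (digitsValue 2 n a) = digitsValue 2 n b := by
  induction n generalizing a b with
  | zero => rfl
  | succ n ih =>
    have ha1 := ha 1 le_rfl (by omega)
    have ha_succ : ∀ i, 1 ≤ i → i ≤ n → a (i + 1) < 2 := fun i hi hin => ha _ (by omega) (by omega)
    have hb_succ : ∀ i, 1 ≤ i → i ≤ n → b (i + 1) = if a i = a (i + 1) then 0 else 1 :=
      fun i hi hin => by simpa using hb (i + 1) (by omega) (by omega)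
    rw [digitsValue_succ, digitsValue_succ, hb1, piPow_succ_mul_add _ (digitsValue_lt ha_succ)]
    congr 1
    obtain rfl | hn := n.eq_zero_or_pos
    · simp [piPow]
    obtain h | h : a 1 = 0 ∨ a 1 = 1 := by omega
    · rw [h, if_pos Even.zero]
      refine ih _ _ ha_succ ?_ fun i hi hin => ?_
      · have := ha_succ 1 le_rfl hn
        rw [hb_succ 1 le_rfl hn, h]
        split_ifs <;> omega
      · simpa [Nat.sub_add_cancel (by omega : 1 ≤ i)] using hb_succ i (by omega) hin
    · rw [h, if_neg Nat.not_even_one, ← digitsValue_complement ha_succ]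
      refine ih (fun i => 2 - 1 - a (i + 1)) _ ?_ ?_ fun i hi hin => ?_
      · exact fun i hi hin => by have := ha_succ i hi hin; omega
      · have := ha_succ 1 le_rfl hn
        rw [hb_succ 1 le_rfl hn, h]
        split_ifs <;> omega
      · have := ha_succ i (by omega) hin
        have := ha i (by omega) (by omega)
        rw [hb_succ i (by omega) hin, Nat.sub_add_cancel (by omega : 1 ≤ i)]
        split_ifs <;> omega

theorem piPow_two_binary_general (n : ℕ)
    (a b : ℕ → ℕ) (ha : ∀ i, 1 ≤ i → i ≤ n → a i < 2)
    (k : ℕ) (hk : k = ∑ i ∈ Finset.Icc 1 n, a i * 2 ^ (n - i))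
    (hb1 : b 1 = a 1)
    (hb : ∀ i, 2 ≤ i → i ≤ n → b i = if a (i - 1) = a i then 0 else 1) :
    piPow 2 n k = ∑ i ∈ Finset.Icc 1 n, b i * 2 ^ (n - i) := by
  subst hk
  exact piPow_two_digitsValue n a b ha hb1 hb

/-- Binary description of `π_{2^n}`: if `k = a_1·2^{n−1} + ⋯ + a_n` with digits
`a_i ∈ {0,1}`, then `π_{2^n}(k) = b_1·2^{n−1} + ⋯ + b_n` where `b_1 = a_1` and, for
`2 ≤ i ≤ n`, `b_i = 0` if `a_{i−1} = a_i` and `b_i = 1` otherwise. -/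
theorem piPow_two_binary (n : ℕ) (hn : 1 ≤ n)
    (a b : ℕ → ℕ) (ha : ∀ i, 1 ≤ i → i ≤ n → a i < 2)
    (k : ℕ) (hk : k = ∑ i ∈ Finset.Icc 1 n, a i * 2 ^ (n - i))
    (hb1 : b 1 = a 1)
    (hb : ∀ i, 2 ≤ i → i ≤ n → b i = if a (i - 1) = a i then 0 else 1) :
    piPow 2 n k = ∑ i ∈ Finset.Icc 1 n, b i * 2 ^ (n - i) :=
  piPow_two_binary_general n a b ha k hk hb1 hb
end

section
/- Let p be a prime, n ≥ 1, let x_0 < x_1 < ... < x_{p^n−1} be the p^n fixed points of g_p^n, let α be a generator of the multiplicative group of F_{p^n}, and let B_α be defined by B_α(x_0) = 0 and B_α(x_k) = α^{π_{p^n}(k)} for k ≥ 1. Then for all 1 ≤ i, j ≤ p^n − 1 one has B_α(x_i)·B_α(x_j) = B_α(x_r), where r is the unique index with π_{p^n}(r) = s and s is the unique element of {1, 2, ..., p^n − 1} congruent to π_{p^n}(i) + π_{p^n}(j) modulo p^n − 1. -/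

lemma piPow_zero (p n : ℕ) : piPow p n 0 = 0 := by
  induction n with
  | zero => rfl
  | succ n ih => simp [piPow, ih]

/-- The bijection `B_α` relates the order of the fixed points with the multiplication of
`F_{p^n}`: `B_α(x_i)·B_α(x_j) = B_α(x_r)` where `r = π_{p^n}⁻¹((π_{p^n}(i) + π_{p^n}(j))
mod p^n − 1)`, the class representative modulo `p^n − 1` being taken in
`{1, …, p^n − 1}`. -/
theorem B_alpha_mul (p n : ℕ) [Fact p.Prime] (hn : 1 ≤ n)
    (x : ℕ → ℝ) (hmono : StrictMonoOn x (Set.Iio (p ^ n)))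
    (himg : x '' Set.Iio (p ^ n) = {y ∈ Set.Icc (0 : ℝ) 1 | (gp p)^[n] y = y})
    (α : (GaloisField p n)ˣ) (hα : ∀ β : (GaloisField p n)ˣ, β ∈ Subgroup.zpowers α)
    (B : ℝ → GaloisField p n) (hB0 : B (x 0) = 0)
    (hBk : ∀ k, 1 ≤ k → k < p ^ n → B (x k) = (α : GaloisField p n) ^ piPow p n k)
    (i j r s : ℕ) (hi1 : 1 ≤ i) (hi2 : i ≤ p ^ n - 1) (hj1 : 1 ≤ j) (hj2 : j ≤ p ^ n - 1)
    (hs1 : 1 ≤ s) (hs2 : s ≤ p ^ n - 1)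
    (hsmod : s % (p ^ n - 1) = (piPow p n i + piPow p n j) % (p ^ n - 1))
    (hr : r < p ^ n) (hrs : piPow p n r = s) :
    B (x i) * B (x j) = B (x r) := by
  have hp : 1 < p := (Fact.out : p.Prime).one_lt
  have hpn : 2 ≤ p ^ n := by
    calc 2 ≤ p := hp
    _ = p ^ 1 := (pow_one p).symm
    _ ≤ p ^ n := Nat.pow_le_pow_right (by omega) hn
  have hi' : i < p ^ n := by omega
  have hj' : j < p ^ n := by omega
  have hr1 : 1 ≤ r := by
    by_contra h
    have : r = 0 := by omega
    rw [this, piPow_zero] at hrs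
    omega
  rw [hBk i hi1 hi', hBk j hj1 hj', hBk r hr1 hr, hrs, ← pow_add]
  have hone : (α : GaloisField p n) ^ (p ^ n - 1) = 1 := by
    have : Fintype (GaloisField p n) := Fintype.ofFinite _
    have hcard : Fintype.card (GaloisField p n) = p ^ n := by
      rw [← Nat.card_eq_fintype_card]; exact GaloisField.card p n (by omega)
    have := FiniteField.pow_card_sub_one_eq_one (α : GaloisField p n) α.ne_zero
    rwa [hcard] at this
  calc (α : GaloisField p n) ^ (piPow p n i + piPow p n j)
      = (α : GaloisField p n) ^ ((piPow p n i + piPow p n j) % (p ^ n - 1)) :=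
        pow_eq_pow_mod _ hone
    _ = (α : GaloisField p n) ^ (s % (p ^ n - 1)) := by rw [hsmod]
    _ = (α : GaloisField p n) ^ s := (pow_eq_pow_mod _ hone).symm
end

section
/- Let p be a prime, n ≥ 1, u < v real numbers, f : [u,v] → [u,v] a function, and h : [0,1] → [u,v] a continuous bijection such that f(h(x)) = h(g_p(x)) for all x ∈ [0,1]. Then there exists a bijection B_f from the set {y ∈ [u,v] : f^n(y) = y} (f^n the n-fold iterate) onto the finite field F_{p^n} such that (B_f(y))^p = B_f(f(y)) for every y with f^n(y) = y. -/
open Set Function Real Polynomial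

section Conjugacy

variable {α β : Type*} {σ : α → α} {τ : β → β}

lemma Function.iterate_eq_iterate_iff_modEq {x : α} (hx : x ∈ periodicPts σ) {a b : ℕ} :
    σ^[a] x = σ^[b] x ↔ a ≡ b [MOD minimalPeriod σ x] := by
  have hpos := minimalPeriod_pos_of_mem_periodicPts hx
  rw [← iterate_mod_minimalPeriod_eq, ← iterate_mod_minimalPeriod_eq (n := b),
    iterate_eq_iterate_iff_of_lt_minimalPeriod (Nat.mod_lt _ hpos) (Nat.mod_lt _ hpos)]
  rfl

lemma Set.MapsTo.sdiff_range_iterate {s : Set α} (hσ : MapsTo σ s s) (hsp : s ⊆ periodicPts σ)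
    (x₀ : α) : MapsTo σ (s \ range (σ^[·] x₀)) (s \ range (σ^[·] x₀)) := by
  refine fun x hx => ⟨hσ hx.1, fun ⟨n, hn⟩ => hx.2 ⟨minimalPeriod σ x - 1 + n, ?_⟩⟩
  have hpos := minimalPeriod_pos_of_mem_periodicPts (hsp hx.1)
  -- `x = σ^[k - 1] (σ x)` for the minimal period `k` of `x`
  beta_reduce at hn ⊢
  rw [iterate_add_apply, hn, ← iterate_succ_apply, Nat.succ_eq_add_one,
    Nat.sub_add_cancel hpos, iterate_minimalPeriod]

lemma ncard_sep_minimalPeriod_range_iterate {x₀ : α} (hx₀ : x₀ ∈ periodicPts σ) (d : ℕ) :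
    {x ∈ range (σ^[·] x₀) | minimalPeriod σ x = d}.ncard =
      if minimalPeriod σ x₀ = d then (range (σ^[·] x₀)).ncard else 0 := by
  have hper : ∀ x ∈ range (σ^[·] x₀), minimalPeriod σ x = minimalPeriod σ x₀ := by
    rintro _ ⟨n, rfl⟩
    exact minimalPeriod_apply_iterate hx₀ n
  split_ifs with hd
  · rw [sep_eq_self_iff_mem_true.2 fun x hx => (hper x hx).trans hd]
  · rw [sep_eq_empty_iff_mem_false.2 fun x hx => (hper x hx).symm ▸ hd, ncard_empty]

lemma exists_bijOn_range_iterate {x₀ : α} {y₀ : β} (hx₀ : x₀ ∈ periodicPts σ)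
    (h : minimalPeriod σ x₀ = minimalPeriod τ y₀) :
    ∃ e : α → β, BijOn e (range (σ^[·] x₀)) (range (τ^[·] y₀)) ∧
      ∀ x ∈ range (σ^[·] x₀), e (σ x) = τ (e x) := by
  have hy₀ : y₀ ∈ periodicPts τ := by
    rw [← minimalPeriod_pos_iff_mem_periodicPts, ← h]
    exact minimalPeriod_pos_of_mem_periodicPts hx₀
  have hiff : ∀ a b, σ^[a] x₀ = σ^[b] x₀ ↔ τ^[a] y₀ = τ^[b] y₀ := fun a b => by
    rw [iterate_eq_iterate_iff_modEq hx₀, iterate_eq_iterate_iff_modEq hy₀, h]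
  have hfac : (τ^[·] y₀).FactorsThrough (σ^[·] x₀) := fun a b hab => (hiff a b).1 hab
  have he (n : ℕ) := hfac.extend_apply (fun _ => y₀) n
  refine ⟨extend (σ^[·] x₀) (τ^[·] y₀) fun _ => y₀, ⟨?_, ?_, ?_⟩, ?_⟩
  · rintro _ ⟨n, rfl⟩
    exact ⟨n, (he n).symm⟩
  · rintro _ ⟨a, rfl⟩ _ ⟨b, rfl⟩ hab
    exact (hiff a b).2 (by rwa [he, he] at hab)
  · rintro _ ⟨n, rfl⟩
    exact ⟨σ^[n] x₀, ⟨n, rfl⟩, he n⟩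
  · rintro _ ⟨n, rfl⟩
    beta_reduce
    rw [← iterate_succ_apply' σ, he, he, iterate_succ_apply']

lemma Set.BijOn.piecewise_sdiff {s₁ s : Set α} {t₁ t : Set β} {f g : α → β}
    [DecidablePred (· ∈ s₁)] (hs : s₁ ⊆ s) (ht : t₁ ⊆ t) (hf : BijOn f s₁ t₁)
    (hg : BijOn g (s \ s₁) (t \ t₁)) : BijOn (s₁.piecewise f g) s t := by
  have hf' := hf.congr (piecewise_eqOn s₁ f g).symm
  have hg' := hg.congr ((piecewise_eqOn_compl s₁ f g).mono (sdiff_subset_compl _ _)).symm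
  have hinj : InjOn (s₁.piecewise f g) (s₁ ∪ (s \ s₁)) := by
    refine (injOn_union disjoint_sdiff_right).2 ⟨hf'.injOn, hg'.injOn, ?_⟩
    intro x hx y hy hxy
    exact (hg'.mapsTo hy).2 (hxy ▸ hf'.mapsTo hx)
  simpa only [union_sdiff_cancel hs, union_sdiff_cancel ht] using hf'.union hg' hinj

lemma ncard_isPeriodicPt_eq_sum_ncard_minimalPeriod {s : Set α} (hs : s.Finite) (σ : α → α)
    {d : ℕ} (hd : d ≠ 0) :
    {x ∈ s | IsPeriodicPt σ d x}.ncard =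
      ∑ k ∈ d.divisors, {x ∈ s | minimalPeriod σ x = k}.ncard := by
  classical
  obtain ⟨S, rfl⟩ := hs.exists_finset_coe
  have hcoe (P : α → Prop) : {x ∈ (S : Set α) | P x}.ncard = (S.filter P).card := by
    rw [← ncard_coe_finset, Finset.coe_filter]
    rfl
  simp only [hcoe]
  rw [Finset.card_eq_sum_card_fiberwise (f := minimalPeriod σ) (t := d.divisors)
    fun x hx => Nat.mem_divisors.2 ⟨(Finset.mem_filter.1 hx).2.minimalPeriod_dvd, hd⟩]
  refine Finset.sum_congr rfl fun k hk => congrArg Finset.card ?_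
  ext x
  simp only [Finset.mem_filter, and_assoc, and_congr_right_iff]
  intro _
  refine and_iff_right_of_imp fun hx => ?_
  rw [isPeriodicPt_iff_minimalPeriod_dvd, hx]
  exact Nat.dvd_of_mem_divisors hk

lemma ncard_minimalPeriod_eq_of_ncard_isPeriodicPt_eq {s : Set α} {t : Set β} {N : ℕ}
    (hs : s.Finite) (ht : t.Finite) (hN : N ≠ 0) (hσ : ∀ x ∈ s, IsPeriodicPt σ N x)
    (hτ : ∀ y ∈ t, IsPeriodicPt τ N y)
    (h : ∀ d, d ∣ N → {x ∈ s | IsPeriodicPt σ d x}.ncard = {y ∈ t | IsPeriodicPt τ d y}.ncard)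
    (d : ℕ) : {x ∈ s | minimalPeriod σ x = d}.ncard = {y ∈ t | minimalPeriod τ y = d}.ncard := by
  induction d using Nat.strong_induction_on with
  | _ d ih =>
  by_cases hd : d ∣ N
  · have hd0 : d ≠ 0 := ne_zero_of_dvd_ne_zero hN hd
    have hsum := h d hd
    rw [ncard_isPeriodicPt_eq_sum_ncard_minimalPeriod hs σ hd0,
      ncard_isPeriodicPt_eq_sum_ncard_minimalPeriod ht τ hd0,
      ← Nat.cons_self_properDivisors hd0, Finset.sum_cons, Finset.sum_cons,
      Finset.sum_congr rfl fun k hk => ih k (Nat.mem_properDivisors.1 hk).2] at hsum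
    exact Nat.add_right_cancel hsum
  · have hs' : {x ∈ s | minimalPeriod σ x = d} = ∅ :=
      eq_empty_of_forall_notMem fun x ⟨hx, hxd⟩ => hd (hxd ▸ (hσ x hx).minimalPeriod_dvd)
    have ht' : {y ∈ t | minimalPeriod τ y = d} = ∅ :=
      eq_empty_of_forall_notMem fun y ⟨hy, hyd⟩ => hd (hyd ▸ (hτ y hy).minimalPeriod_dvd)
    rw [hs', ht', ncard_empty, ncard_empty]

lemma ncard_sep_sdiff_add_ncard_sep {s u : Set α} (hs : s.Finite) (hu : u ⊆ s) (P : α → Prop) :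
    {x ∈ s \ u | P x}.ncard + {x ∈ u | P x}.ncard = {x ∈ s | P x}.ncard := by
  have hsep : {x ∈ s \ u | P x} = {x ∈ s | P x} \ {x ∈ u | P x} := by
    ext x
    simp only [mem_sdiff, mem_ofPred_eq]
    tauto
  rw [hsep]
  exact ncard_sdiff_add_ncard_of_subset (fun x hx => ⟨hu hx.1, hx.2⟩) (hs.subset (sep_subset _ _))

lemma exists_mem_minimalPeriod_eq {s : Set α} {t : Set β} (hs : s.Finite) (ht : t.Finite)
    (h : ∀ d, {x ∈ s | minimalPeriod σ x = d}.ncard = {y ∈ t | minimalPeriod τ y = d}.ncard)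
    {x : α} (hx : x ∈ s) : ∃ y ∈ t, minimalPeriod τ y = minimalPeriod σ x := by
  have hpos : 0 < {y ∈ t | minimalPeriod τ y = minimalPeriod σ x}.ncard := by
    rw [← h]
    exact (ncard_pos (hs.subset (sep_subset _ _))).2 ⟨x, hx, rfl⟩
  exact (ncard_pos (ht.subset (sep_subset _ _))).1 hpos

theorem exists_bijOn_semiconj_of_ncard_minimalPeriod_eq [Nonempty β] {s : Set α} {t : Set β}
    (hs : s.Finite) (ht : t.Finite) (hσ : MapsTo σ s s) (hτ : MapsTo τ t t)
    (hσp : s ⊆ periodicPts σ) (hτp : t ⊆ periodicPts τ)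
    (h : ∀ d, {x ∈ s | minimalPeriod σ x = d}.ncard = {y ∈ t | minimalPeriod τ y = d}.ncard) :
    ∃ e : α → β, BijOn e s t ∧ ∀ x ∈ s, e (σ x) = τ (e x) := by
  classical
  induction hk : s.ncard using Nat.strong_induction_on generalizing s t with
  | _ k ih =>
  obtain rfl | ⟨x₀, hx₀⟩ := s.eq_empty_or_nonempty
  · obtain rfl : t = ∅ := eq_empty_of_forall_notMem fun y hy =>
      have ⟨_, hx, _⟩ := exists_mem_minimalPeriod_eq ht hs (fun d => (h d).symm) hy
      hx
    exact ⟨fun _ => Classical.arbitrary β, bijOn_empty _, fun _ => False.elim⟩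
  obtain ⟨y₀, hy₀, hmin⟩ := exists_mem_minimalPeriod_eq hs ht h hx₀
  set O := range (σ^[·] x₀)
  set O' := range (τ^[·] y₀)
  obtain ⟨e₁, he₁, he₁σ⟩ := exists_bijOn_range_iterate (τ := τ) (hσp hx₀) hmin.symm
  have hOs : O ⊆ s := range_subset_iff.2 fun n => hσ.iterate n hx₀
  have hOt : O' ⊆ t := range_subset_iff.2 fun n => hτ.iterate n hy₀
  have hcount (d : ℕ) : {x ∈ s \ O | minimalPeriod σ x = d}.ncard =
      {y ∈ t \ O' | minimalPeriod τ y = d}.ncard := by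
    have hs' := ncard_sep_sdiff_add_ncard_sep hs hOs (minimalPeriod σ · = d)
    have ht' := ncard_sep_sdiff_add_ncard_sep ht hOt (minimalPeriod τ · = d)
    rw [ncard_sep_minimalPeriod_range_iterate (hσp hx₀)] at hs'
    rw [ncard_sep_minimalPeriod_range_iterate (hτp hy₀), hmin, ← he₁.ncard_eq] at ht'
    have := h d
    omega
  have hlt : (s \ O).ncard < k :=
    hk ▸ ncard_lt_ncard (sdiff_ssubset_left_iff.2 ⟨x₀, hx₀, 0, rfl⟩) hs
  obtain ⟨e₂, he₂, he₂σ⟩ := ih _ hlt hs.sdiff ht.sdiff (hσ.sdiff_range_iterate hσp x₀)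
    (hτ.sdiff_range_iterate hτp y₀) (sdiff_subset.trans hσp) (sdiff_subset.trans hτp) hcount rfl
  refine ⟨O.piecewise e₁ e₂, he₁.piecewise_sdiff hOs hOt he₂, fun x hx => ?_⟩
  by_cases hxO : x ∈ O
  · have hσx : σ x ∈ O := by
      obtain ⟨n, rfl⟩ := hxO
      exact ⟨n + 1, iterate_succ_apply' σ n x₀⟩
    rw [piecewise_eq_of_mem _ _ _ hxO, piecewise_eq_of_mem _ _ _ hσx, he₁σ x hxO]
  · have hσx : σ x ∉ O := (hσ.sdiff_range_iterate hσp x₀ ⟨hx, hxO⟩).2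
    rw [piecewise_eq_of_notMem _ _ _ hxO, piecewise_eq_of_notMem _ _ _ hσx, he₂σ x ⟨hx, hxO⟩]

theorem exists_bijOn_semiconj_of_ncard_isPeriodicPt_eq [Nonempty β] {s : Set α} {t : Set β}
    {N : ℕ} (hs : s.Finite) (ht : t.Finite) (hN : N ≠ 0) (hσ : MapsTo σ s s)
    (hτ : MapsTo τ t t) (hσN : ∀ x ∈ s, IsPeriodicPt σ N x) (hτN : ∀ y ∈ t, IsPeriodicPt τ N y)
    (h : ∀ d, d ∣ N → {x ∈ s | IsPeriodicPt σ d x}.ncard = {y ∈ t | IsPeriodicPt τ d y}.ncard) :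
    ∃ e : α → β, BijOn e s t ∧ ∀ x ∈ s, e (σ x) = τ (e x) :=
  exists_bijOn_semiconj_of_ncard_minimalPeriod_eq hs ht hσ hτ
    (fun x hx => mk_mem_periodicPts (Nat.pos_of_ne_zero hN) (hσN x hx))
    (fun y hy => mk_mem_periodicPts (Nat.pos_of_ne_zero hN) (hτN y hy))
    (ncard_minimalPeriod_eq_of_ncard_isPeriodicPt_eq hs ht hN hσN hτN h)

end Conjugacy

lemma GaloisField.pow_card_eq_self (p : ℕ) [Fact p.Prime] {n : ℕ} (hn : n ≠ 0)
    (y : GaloisField p n) : y ^ p ^ n = y := by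
  have := Fintype.ofFinite (GaloisField p n)
  rw [← GaloisField.card p n hn, Nat.card_eq_fintype_card, FiniteField.pow_card]

lemma GaloisField.ncard_pow_eq_self (p : ℕ) [Fact p.Prime] {n d : ℕ} (hn : n ≠ 0)
    (hd : d ∣ n) : {y : GaloisField p n | y ^ p ^ d = y}.ncard = p ^ d := by
  classical
  have hd0 : d ≠ 0 := ne_zero_of_dvd_ne_zero hn hd
  have hp : 1 < p := (Fact.out : p.Prime).one_lt
  apply le_antisymm
  · set P : (GaloisField p n)[X] := X ^ p ^ d - X
    have hP : P ≠ 0 := FiniteField.X_pow_card_pow_sub_X_ne_zero _ hd0 hp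
    have hroots : {y : GaloisField p n | y ^ p ^ d = y} = ↑P.roots.toFinset := by
      ext y
      simp [P, mem_roots hP, sub_eq_zero]
    rw [hroots, ncard_coe_finset,
      ← FiniteField.X_pow_card_pow_sub_X_natDegree_eq (GaloisField p n) hd0 hp]
    exact (Multiset.toFinset_card_le _).trans (card_roots' P)
  · obtain ⟨φ⟩ : Nonempty (GaloisField p d →ₐ[ZMod p] GaloisField p n) :=
      FiniteField.nonempty_algHom_of_finrank_dvd
        (by rwa [GaloisField.finrank p hd0, GaloisField.finrank p hn])
    calc p ^ d = (range φ).ncard := by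
          rw [ncard_range_of_injective (f := φ) φ.injective, GaloisField.card p d hd0]
      _ ≤ _ := by
        refine ncard_le_ncard ?_ (toFinite _)
        rintro _ ⟨x, rfl⟩
        rw [mem_ofPred_eq, ← map_pow, GaloisField.pow_card_eq_self p hd0]

section Transfer

variable {α β γ : Type*} {σ : α → α} {τ : β → β} {f : γ → γ} {h : α → γ} {s : Set α}
  {s' : Set γ} {t : Set β}

lemma Set.BijOn.sep_isPeriodicPt (hh : BijOn h s s') (hσ : MapsTo σ s s)
    (hconj : ∀ x ∈ s, h (σ x) = f (h x)) (n : ℕ) :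
    BijOn h {x ∈ s | IsPeriodicPt σ n x} {y ∈ s' | IsPeriodicPt f n y} := by
  have hiter : ∀ x ∈ s, h (σ^[n] x) = f^[n] (h x) := by
    induction n with
    | zero => exact fun _ _ => rfl
    | succ n ih =>
      intro x hx
      rw [iterate_succ_apply, iterate_succ_apply, ← hconj x hx, ih (σ x) (hσ hx)]
  refine ⟨fun x hx => ⟨hh.mapsTo hx.1, ?_⟩, hh.injOn.mono (sep_subset _ _), ?_⟩
  · rw [IsPeriodicPt, IsFixedPt, ← hiter x hx.1, hx.2.eq]
  · rintro y ⟨hy, hyn⟩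
    obtain ⟨x, hx, rfl⟩ := hh.surjOn hy
    refine ⟨x, ⟨hx, hh.injOn (hσ.iterate n hx) hx ?_⟩, rfl⟩
    rw [hiter x hx, hyn.eq]

lemma Set.BijOn.comp_invFunOn_semiconj [Nonempty α] (hh : BijOn h s s') (hσ : MapsTo σ s s)
    (hconj : ∀ x ∈ s, h (σ x) = f (h x)) {e : α → β} (he : BijOn e s t)
    (heσ : ∀ x ∈ s, e (σ x) = τ (e x)) :
    BijOn (e ∘ invFunOn h s) s' t ∧ ∀ y ∈ s', e (invFunOn h s (f y)) = τ (e (invFunOn h s y)) := by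
  have hinv := hh.invOn_invFunOn
  refine ⟨he.comp (hh.symm hinv.symm), fun y hy => ?_⟩
  have hx : invFunOn h s y ∈ s := (hh.symm hinv.symm).mapsTo hy
  conv_lhs => rw [← hinv.2 hy, ← hconj _ hx, hinv.1 (hσ hx)]
  exact heσ _ hx

end Transfer

lemma gp_mem_Icc (p : ℕ) (x : ℝ) : gp p x ∈ Icc 0 1 := by
  have h₁ := Int.floor_le ((p : ℝ) * x)
  have h₂ := Int.lt_floor_add_one ((p : ℝ) * x)
  unfold gp
  split_ifs <;> constructor <;> linarith

lemma cos_pi_mul_gp (p : ℕ) (x : ℝ) : cos (π * gp p x) = cos (π * (p * x)) := by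
  unfold gp
  split_ifs with h
  · obtain ⟨j, hj⟩ := h
    rw [hj, ← cos_sub_int_mul_two_pi (π * (p * x)) j]
    congr 1
    push_cast
    ring
  · obtain ⟨j, hj⟩ := Int.not_even_iff_odd.1 h
    rw [hj, ← cos_neg (π * (p * x)), ← cos_add_int_mul_two_pi (-(π * (p * x))) (j + 1)]
    congr 1
    push_cast
    ring

lemma cos_pi_mul_gp_iterate (p m : ℕ) (x : ℝ) :
    cos (π * (gp p)^[m] x) = cos (π * (p ^ m * x)) := by
  induction m generalizing x with
  | zero => simp
  | succ m ih =>
    have hT (θ : ℝ) := Polynomial.Chebyshev.T_real_cos θ ((p ^ m : ℕ) : ℤ)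
    push_cast at hT
    rw [iterate_succ_apply, ih, show π * (p ^ m * gp p x) = p ^ m * (π * gp p x) by ring, ← hT,
      cos_pi_mul_gp, hT]
    congr 1
    ring

lemma isPeriodicPt_gp_iff {p m : ℕ} (hm : m ≠ 0) {x : ℝ} (hx : x ∈ Icc 0 1) :
    IsPeriodicPt (gp p) m x ↔ cos (π * (p ^ m * x)) = cos (π * x) := by
  have hIcc {y : ℝ} (hy : y ∈ Icc 0 1) : π * y ∈ Icc 0 π :=
    ⟨by nlinarith [pi_pos, hy.1], by nlinarith [pi_pos, hy.2]⟩
  have hgm : (gp p)^[m] x ∈ Icc 0 1 := by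
    obtain ⟨m, rfl⟩ := Nat.exists_eq_succ_of_ne_zero hm
    rw [iterate_succ_apply']
    exact gp_mem_Icc p _
  rw [← cos_pi_mul_gp_iterate, IsPeriodicPt, IsFixedPt]
  exact ⟨fun h => by rw [h],
    fun h => mul_left_cancel₀ pi_ne_zero (injOn_cos (hIcc hgm) (hIcc hx) h)⟩

lemma cos_pi_mul_eq_cos_pi_iff (q x : ℝ) :
    cos (π * (q * x)) = cos (π * x) ↔ ∃ K : ℤ, (q - 1) * x = 2 * K ∨ (q + 1) * x = 2 * K := by
  rw [cos_eq_cos_iff]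
  constructor
  · rintro ⟨K, hK | hK⟩
    · exact ⟨-K, Or.inl (mul_left_cancel₀ pi_ne_zero (by push_cast; linear_combination -hK))⟩
    · exact ⟨K, Or.inr (mul_left_cancel₀ pi_ne_zero (by linear_combination hK))⟩
  · rintro ⟨K, hK | hK⟩
    · exact ⟨-K, Or.inl (by push_cast; linear_combination (-π) * hK)⟩
    · exact ⟨K, Or.inr (by linear_combination π * hK)⟩

/-- For `k < q`, the `k`-th smallest solution of `cos (q π x) = cos (π x)` in `[0, 1]`. -/
noncomputable def cosEqSol (q k : ℕ) : ℝ :=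
  if Even k then k / (q - 1) else (k + 1) / (q + 1)

section cosEqSol

variable {q : ℕ}

lemma cosEqSol_two_mul (q j : ℕ) : cosEqSol q (2 * j) = 2 * j / (q - 1) := by
  simp [cosEqSol]

lemma cosEqSol_two_mul_add_one (q j : ℕ) : cosEqSol q (2 * j + 1) = 2 * (j + 1) / (q + 1) := by
  simp only [cosEqSol, Nat.not_even_two_mul_add_one, if_false]
  push_cast
  ring

lemma strictMonoOn_cosEqSol (hq : 2 ≤ q) : StrictMonoOn (cosEqSol q) (Iio q) := by
  have hq' : (2 : ℝ) ≤ q := by exact_mod_cast hq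
  refine strictMonoOn_of_lt_succ ordConnected_Iio fun k _ _ hk => ?_
  rw [mem_Iio, Order.succ_eq_add_one] at hk
  rw [Order.succ_eq_add_one]
  obtain ⟨j, rfl | rfl⟩ := Nat.even_or_odd' k
  · have hj : (2 * j + 2 : ℝ) ≤ q := by exact_mod_cast hk
    rw [cosEqSol_two_mul, cosEqSol_two_mul_add_one, div_lt_div_iff₀ (by linarith) (by linarith)]
    nlinarith
  · rw [cosEqSol_two_mul_add_one, show 2 * j + 1 + 1 = 2 * (j + 1) by ring, cosEqSol_two_mul]
    push_cast
    exact div_lt_div_of_pos_left (by positivity) (by linarith) (by linarith)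

lemma sep_cos_eq_eq_image_cosEqSol (hq : 2 ≤ q) :
    {x ∈ Icc 0 1 | cos (π * (q * x)) = cos (π * x)} = cosEqSol q '' Iio q := by
  have hq' : (2 : ℝ) ≤ q := by exact_mod_cast hq
  ext x
  simp only [mem_ofPred_eq, cos_pi_mul_eq_cos_pi_iff, mem_image, mem_Iio]
  constructor
  · rintro ⟨⟨hx₀, hx₁⟩, K, hK⟩
    have hK₀ : 0 ≤ K := by
      have : (0 : ℝ) ≤ K := by rcases hK with hK | hK <;> nlinarith
      exact_mod_cast this
    lift K to ℕ using hK₀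
    push_cast at hK
    have even_case (j : ℕ) (hj : (q - 1) * x = 2 * j) : ∃ k < q, cosEqSol q k = x := by
      refine ⟨2 * j, ?_, ?_⟩
      · have : (2 * j + 1 : ℝ) ≤ q := by nlinarith
        exact_mod_cast this
      · rw [cosEqSol_two_mul, div_eq_iff (by linarith)]
        linarith
    rcases hK with hK | hK
    · exact even_case K hK
    rcases K with _ | j
    · exact even_case 0 (by push_cast at hK ⊢; nlinarith)
    push_cast at hK
    have hjq : 2 * (j + 1) ≤ q + 1 := by
      have : (2 * (j + 1) : ℝ) ≤ q + 1 := by nlinarith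
      exact_mod_cast this
    by_cases hjq' : 2 * (j + 1) = q + 1
    · have hjq'' : (2 * (j + 1) : ℝ) = q + 1 := by exact_mod_cast hjq'
      have hx : x = 1 := by nlinarith
      exact even_case j (by rw [hx]; linarith)
    refine ⟨2 * j + 1, by omega, ?_⟩
    rw [cosEqSol_two_mul_add_one, div_eq_iff (by linarith)]
    linarith
  · rintro ⟨k, hk, rfl⟩
    obtain ⟨j, rfl | rfl⟩ := Nat.even_or_odd' k
    · have hj : (2 * j + 1 : ℝ) ≤ q := by exact_mod_cast hk
      rw [cosEqSol_two_mul]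
      refine ⟨⟨div_nonneg (by positivity) (by linarith),
        (div_le_one (by linarith)).2 (by linarith)⟩, j, Or.inl ?_⟩
      have : (q : ℝ) - 1 ≠ 0 := by linarith
      push_cast
      field_simp
    · have hj : (2 * j + 2 : ℝ) ≤ q := by exact_mod_cast hk
      rw [cosEqSol_two_mul_add_one]
      refine ⟨⟨by positivity, (div_le_one (by linarith)).2 (by linarith)⟩, j + 1, Or.inr ?_⟩
      push_cast
      field_simp

lemma ncard_sep_cos_eq (hq : 2 ≤ q) :
    {x ∈ Icc 0 1 | cos (π * (q * x)) = cos (π * x)}.ncard = q := by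
  rw [sep_cos_eq_eq_image_cosEqSol hq, (strictMonoOn_cosEqSol hq).injOn.ncard_image,
    ← Finset.coe_range, ncard_coe_finset, Finset.card_range]

end cosEqSol

lemma ncard_isPeriodicPt_gp {p m : ℕ} (hp : 2 ≤ p) (hm : m ≠ 0) :
    {x ∈ Icc 0 1 | IsPeriodicPt (gp p) m x}.ncard = p ^ m := by
  have hsep : {x ∈ Icc 0 1 | IsPeriodicPt (gp p) m x} =
      {x ∈ Icc 0 1 | cos (π * ((p ^ m : ℕ) * x)) = cos (π * x)} :=
    sep_ext_iff.2 fun x hx => by rw [isPeriodicPt_gp_iff hm hx, Nat.cast_pow]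
  rw [hsep, ncard_sep_cos_eq (hp.trans (Nat.le_self_pow hm p))]

theorem exists_bijOn_isPeriodicPt_gp_frobenius (p : ℕ) [Fact p.Prime] {n : ℕ} (hn : n ≠ 0) :
    ∃ e : ℝ → GaloisField p n, BijOn e {x ∈ Icc 0 1 | IsPeriodicPt (gp p) n x} univ ∧
      ∀ x ∈ {x ∈ Icc 0 1 | IsPeriodicPt (gp p) n x}, e (gp p x) = e x ^ p := by
  have hp : 2 ≤ p := (Fact.out : p.Prime).two_le
  set G := {x ∈ Icc 0 1 | IsPeriodicPt (gp p) n x}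
  have hG : G.Finite :=
    finite_of_ncard_ne_zero (by rw [ncard_isPeriodicPt_gp hp hn]; positivity)
  refine exists_bijOn_semiconj_of_ncard_isPeriodicPt_eq (τ := (· ^ p)) hG (toFinite _) hn
    (fun x hx => ⟨gp_mem_Icc p x, hx.2.apply⟩) (mapsTo_univ _ _) (fun x hx => hx.2)
    (fun y _ => by simp [IsPeriodicPt, IsFixedPt, pow_iterate, GaloisField.pow_card_eq_self p hn])
    fun d hd => ?_
  have hGd : {x ∈ G | IsPeriodicPt (gp p) d x} = {x ∈ Icc 0 1 | IsPeriodicPt (gp p) d x} :=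
    ext fun x => ⟨fun hx => ⟨hx.1.1, hx.2⟩, fun hx => ⟨⟨hx.1, hx.2.trans_dvd hd⟩, hx.2⟩⟩
  have hFd : {y ∈ univ | IsPeriodicPt (· ^ p) d y} = {y : GaloisField p n | y ^ p ^ d = y} := by
    ext
    simp [IsPeriodicPt, IsFixedPt, pow_iterate]
  rw [hGd, hFd, ncard_isPeriodicPt_gp hp (ne_zero_of_dvd_ne_zero hn hd),
    GaloisField.ncard_pow_eq_self p hn hd]

theorem exists_bijection_of_conjugate_general (p n : ℕ) [Fact p.Prime] (hn : 1 ≤ n)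
    (u v : ℝ) (f h : ℝ → ℝ)
    (hbij : Set.BijOn h (Set.Icc 0 1) (Set.Icc u v))
    (hcomm : ∀ x ∈ Set.Icc (0 : ℝ) 1, f (h x) = h (gp p x)) :
    ∃ B : ℝ → GaloisField p n,
      Set.BijOn B {y ∈ Set.Icc u v | f^[n] y = y} Set.univ ∧
      ∀ y ∈ {y ∈ Set.Icc u v | f^[n] y = y}, B y ^ p = B (f y) := by
  have hg : MapsTo (gp p) (Icc 0 1) (Icc 0 1) := fun x _ => gp_mem_Icc p x
  have hconj : ∀ x ∈ Icc (0 : ℝ) 1, h (gp p x) = f (h x) := fun x hx => (hcomm x hx).symm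
  obtain ⟨e, he, heσ⟩ := exists_bijOn_isPeriodicPt_gp_frobenius p (Nat.one_le_iff_ne_zero.1 hn)
  obtain ⟨hB, hBf⟩ := (hbij.sep_isPeriodicPt hg hconj n).comp_invFunOn_semiconj
    (fun x hx => ⟨hg hx.1, hx.2.apply⟩) (fun x hx => hconj x hx.1) he heσ
  exact ⟨_, hB, fun y hy => (hBf y hy).symm⟩

/-- If `f : [u,v] → [u,v]` and `h : [0,1] → [u,v]` is a continuous bijection with
`f ∘ h = h ∘ g_p` on `[0,1]`, then there is a bijection `B_f` from the fixed points of
`f^n` to `F_{p^n}` with `(B_f(y))^p = B_f(f(y))` for every fixed point `y` of `f^n`. -/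
theorem exists_bijection_of_conjugate (p n : ℕ) [Fact p.Prime] (hn : 1 ≤ n)
    (u v : ℝ) (huv : u < v) (f h : ℝ → ℝ)
    (hf : Set.MapsTo f (Set.Icc u v) (Set.Icc u v))
    (hcont : ContinuousOn h (Set.Icc 0 1))
    (hbij : Set.BijOn h (Set.Icc 0 1) (Set.Icc u v))
    (hcomm : ∀ x ∈ Set.Icc (0 : ℝ) 1, f (h x) = h (gp p x)) :
    ∃ B : ℝ → GaloisField p n,
      Set.BijOn B {y ∈ Set.Icc u v | f^[n] y = y} Set.univ ∧
      ∀ y ∈ {y ∈ Set.Icc u v | f^[n] y = y}, B y ^ p = B (f y) :=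
  exists_bijection_of_conjugate_general p n hn u v f h hbij hcomm
end

section
/- Let p be a prime and n ≥ 1. There exists a bijection B from the set {y ∈ [−1,1] : T_{p^n}(y) = y} of fixed points of the Chebyshev polynomial T_{p^n} on [−1,1] to the finite field F_{p^n} such that (B(y))^p = B(T_p(y)) for every y in that set. (Note that T_p maps this set into itself, since T_p ∘ T_{p^n} = T_{p^n} ∘ T_p.) -/
/-!
Write `q = p ^ n`, `K = 𝔽_q` and let `L` be the quadratic extension of `K`. Then `Lˣ` is cyclic of
order `q² - 1`, hence isomorphic, via some `χ`, to the `(q² - 1)`-th roots of unity in `ℂ`. On the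
units `u` with `u ^ q = u ^ (±1)` the two maps `u ↦ Re χ(u)` and `u ↦ u + u⁻¹` both identify
exactly `u` with `u⁻¹`. The first has image the fixed points of `T_q` in `[-1, 1]`, because
`T_q (Re z) = Re (z ^ q)` on the unit circle; the second has image `K`, because every `x ∈ K` is
`u + u⁻¹` for a root `u ∈ L` of `X² - x X + 1`, and the Frobenius `u ↦ u ^ q` permutes the two
roots `u` and `u⁻¹`. So the two maps induce a bijection, and it intertwines `T_p` with `x ↦ x ^ p`
because both correspond to `u ↦ u ^ p`.
-/

open Polynomial Polynomial.Chebyshev Function Set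

theorem add_inv_eq_add_inv_iff {K : Type*} [Field K] {a b : K} (ha : a ≠ 0) (hb : b ≠ 0) :
    a + a⁻¹ = b + b⁻¹ ↔ a = b ∨ a = b⁻¹ := by
  have key : a + a⁻¹ - (b + b⁻¹) = (a - b) * (a * b - 1) / (a * b) := by field_simp; ring
  rw [← sub_eq_zero, key, div_eq_zero_iff, or_iff_left (mul_ne_zero ha hb), mul_eq_zero,
    sub_eq_zero, sub_eq_zero, mul_eq_one_iff_eq_inv₀ hb]

namespace Complex

theorem add_inv_eq_two_mul_re_of_norm_eq_one {z : ℂ} (hz : ‖z‖ = 1) :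
    z + z⁻¹ = 2 * z.re := by
  rw [inv_eq_conj hz, add_conj]
  push_cast; ring

theorem re_eq_re_iff_of_norm_eq_one {z w : ℂ} (hz : ‖z‖ = 1) (hw : ‖w‖ = 1) :
    z.re = w.re ↔ z = w ∨ z = w⁻¹ := by
  rw [← add_inv_eq_add_inv_iff (norm_ne_zero_iff.1 (hz ▸ one_ne_zero))
    (norm_ne_zero_iff.1 (hw ▸ one_ne_zero)), add_inv_eq_two_mul_re_of_norm_eq_one hz,
    add_inv_eq_two_mul_re_of_norm_eq_one hw]
  norm_cast
  simp

end Complex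

theorem Polynomial.Chebyshev.T_real_eval_re {z : ℂ} (hz : ‖z‖ = 1) (n : ℤ) :
    (T ℝ n).eval z.re = (z ^ n).re := by
  obtain ⟨θ, rfl⟩ := (Complex.norm_eq_one_iff z).1 hz
  rw [Complex.exp_ofReal_mul_I_re, T_real_cos, ← Complex.exp_int_mul,
    show (n : ℂ) * (θ * Complex.I) = ((n * θ : ℝ) : ℂ) * Complex.I by push_cast; ring,
    Complex.exp_ofReal_mul_I_re]

def PowEqSelfOrInv {G : Type*} [DivisionMonoid G] (q : ℕ) (g : G) : Prop :=
  g ^ q = g ∨ g ^ q = g⁻¹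

namespace PowEqSelfOrInv

variable {G : Type*} [DivisionMonoid G] {q : ℕ} {g : G}

theorem pow (h : PowEqSelfOrInv q g) (m : ℕ) : PowEqSelfOrInv q (g ^ m) := by
  rw [PowEqSelfOrInv, ← pow_mul, mul_comm, pow_mul, ← inv_pow]
  rcases h with h | h <;> rw [h] <;> simp

theorem pow_sq_eq_self (h : PowEqSelfOrInv q g) : g ^ q ^ 2 = g := by
  rw [sq, pow_mul]
  rcases h with h | h <;> rw [h]
  · exact h
  · rw [inv_pow, h, inv_inv]

theorem pow_sq_sub_one_eq_one {G₀ : Type*} [GroupWithZero G₀] {g : G₀}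
    (h : PowEqSelfOrInv q g) (hg : g ≠ 0) : g ^ (q ^ 2 - 1) = 1 := by
  obtain rfl | hq := Nat.eq_zero_or_pos q
  · simp
  rw [pow_sub₀ _ hg (Nat.one_le_pow _ _ hq), h.pow_sq_eq_self, pow_one, mul_inv_cancel₀ hg]

theorem map_iff {H : Type*} [Group H] {f : H →* G} (hf : Injective f) {u : H} :
    PowEqSelfOrInv q (f u) ↔ PowEqSelfOrInv q u := by
  simp only [PowEqSelfOrInv, ← map_pow, ← map_inv, hf.eq_iff]

end PowEqSelfOrInv

theorem IsCyclic.exists_injective_monoidHom_complex (G : Type*) [Group G] [Finite G]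
    [IsCyclic G] :
    ∃ χ : G →* ℂ, Injective χ ∧ ∀ z : ℂ, z ^ Nat.card G = 1 → z ∈ range χ := by
  have : NeZero (Nat.card G) := ⟨Nat.card_pos.ne'⟩
  let ψ : G ≃* rootsOfUnity (Nat.card G) ℂ :=
    mulEquivOfCyclicCardEq (Complex.card_rootsOfUnity (Nat.card G)).symm
  refine ⟨(Units.coeHom ℂ).comp ((rootsOfUnity _ ℂ).subtype.comp ψ.toMonoidHom),
    Units.val_injective.comp (Subtype.val_injective.comp ψ.injective), fun z hz => ?_⟩
  exact ⟨ψ.symm (rootsOfUnity.mkOfPowEq z hz), by simp⟩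

theorem Polynomial.Chebyshev.T_real_fixedPoints_eq_image (q : ℕ) :
    {y ∈ Icc (-1 : ℝ) 1 | (T ℝ q).eval y = y} =
      (fun z : ℂ => z.re) '' {z | ‖z‖ = 1 ∧ PowEqSelfOrInv q z} := by
  ext y
  constructor
  · rintro ⟨⟨hy₁, hy₂⟩, hfix⟩
    set z := Complex.exp (Real.arccos y * Complex.I)
    have hz : ‖z‖ = 1 := Complex.norm_exp_ofReal_mul_I _
    have hre : z.re = y := by rw [Complex.exp_ofReal_mul_I_re, Real.cos_arccos hy₁ hy₂]
    refine ⟨z, ⟨hz, ?_⟩, hre⟩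
    rw [← hre, T_real_eval_re hz, zpow_natCast] at hfix
    exact (Complex.re_eq_re_iff_of_norm_eq_one (by rw [norm_pow, hz, one_pow]) hz).1 hfix
  · rintro ⟨z, ⟨hz, hpow⟩, rfl⟩
    refine ⟨abs_le.1 (hz ▸ Complex.abs_re_le_norm z), ?_⟩
    rw [T_real_eval_re hz, zpow_natCast]
    exact (Complex.re_eq_re_iff_of_norm_eq_one (by rw [norm_pow, hz, one_pow]) hz).2 hpow

theorem Set.exists_bijOn_image_of_eq_iff_eq {α β γ : Type*} [Nonempty α] {f : α → β}
    {g : α → γ} {s : Set α} (h : ∀ a ∈ s, ∀ b ∈ s, f a = f b ↔ g a = g b) :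
    ∃ B : β → γ, BijOn B (f '' s) (g '' s) ∧ ∀ a ∈ s, B (f a) = g a := by
  have hB : ∀ a ∈ s, g (invFunOn f s (f a)) = g a := fun a ha =>
    (h _ (invFunOn_mem ⟨a, ha, rfl⟩) a ha).1 (invFunOn_eq ⟨a, ha, rfl⟩)
  refine ⟨g ∘ invFunOn f s, ⟨?_, ?_, ?_⟩, hB⟩
  · rintro _ ⟨a, ha, rfl⟩
    exact ⟨a, ha, (hB a ha).symm⟩
  · rintro _ ⟨a, ha, rfl⟩ _ ⟨b, hb, rfl⟩ hab
    exact (h a ha b hb).2 (by rwa [comp_apply, comp_apply, hB a ha, hB b hb] at hab)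
  · rintro _ ⟨a, ha, rfl⟩
    exact ⟨f a, mem_image_of_mem f ha, hB a ha⟩

theorem IsCyclic.exists_chebyshev_parametrization {G : Type*} [Group G] [Finite G] [IsCyclic G]
    {q : ℕ} (hG : Nat.card G = q ^ 2 - 1) :
    ∃ f : G → ℝ, (∀ u v, f u = f v ↔ u = v ∨ u = v⁻¹) ∧
      f '' {u | PowEqSelfOrInv q u} = {y ∈ Icc (-1 : ℝ) 1 | (T ℝ q).eval y = y} ∧
      ∀ (m : ℕ) u, (T ℝ m).eval (f u) = f (u ^ m) := by
  obtain ⟨χ, hχ, hrange⟩ := IsCyclic.exists_injective_monoidHom_complex G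
  have hnorm : ∀ u, ‖χ u‖ = 1 := fun u =>
    Complex.norm_eq_one_of_pow_eq_one (by rw [← map_pow, pow_card_eq_one', map_one])
      Nat.card_pos.ne'
  refine ⟨fun u => (χ u).re, fun u v => ?_, ?_, fun m u => ?_⟩
  · rw [Complex.re_eq_re_iff_of_norm_eq_one (hnorm u) (hnorm v), ← map_inv, hχ.eq_iff,
      hχ.eq_iff]
  · rw [T_real_fixedPoints_eq_image, ← image_image]
    congr 1
    ext z
    constructor
    · rintro ⟨u, hu, rfl⟩
      exact ⟨hnorm u, (PowEqSelfOrInv.map_iff hχ).2 hu⟩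
    · rintro ⟨hz, hzq⟩
      have hz0 : z ≠ 0 := norm_ne_zero_iff.1 (hz ▸ one_ne_zero)
      obtain ⟨u, rfl⟩ := hrange z (hG ▸ hzq.pow_sq_sub_one_eq_one hz0)
      exact ⟨u, (PowEqSelfOrInv.map_iff hχ).1 hzq, rfl⟩
  · rw [T_real_eval_re (hnorm u), zpow_natCast]
    exact congrArg Complex.re (map_pow χ u m).symm

namespace FiniteField

theorem exists_aeval_eq_zero_of_natDegree_eq_two {K L : Type*} [Field K] [Field L] [Finite L]
    [Algebra K L] (hL : 2 ∣ Module.finrank K L) {f : K[X]} (hf : f.natDegree = 2) :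
    ∃ x : L, aeval x f = 0 := by
  have hf0 : f ≠ 0 := ne_zero_of_natDegree_gt (n := 0) (by omega)
  obtain ⟨g, hg, hgf⟩ := WfDvdMonoid.exists_irreducible_factor
    (not_isUnit_of_natDegree_pos f (by omega)) hf0
  have := Fact.mk hg
  have hdeg : g.natDegree ∣ 2 := by
    have h₁ := natDegree_le_of_dvd hgf hf0
    have h₂ := hg.natDegree_pos
    rw [hf] at h₁
    interval_cases g.natDegree <;> norm_num
  obtain ⟨φ⟩ := nonempty_algHom_of_finrank_dvd (F := K) (K := AdjoinRoot g) (L := L) <| by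
    rw [(AdjoinRoot.powerBasis hg.ne_zero).finrank, AdjoinRoot.powerBasis_dim]
    exact hdeg.trans hL
  obtain ⟨h, rfl⟩ := hgf
  exact ⟨φ (AdjoinRoot.root g), by rw [map_mul, aeval_algHom_apply, AdjoinRoot.aeval_eq,
    AdjoinRoot.mk_self, map_zero, zero_mul]⟩

variable {K L : Type*} [Field K] [Fintype K] [Field L] [Finite L] [Algebra K L]

theorem mem_range_algebraMap_iff_pow_card_eq {x : L} :
    x ∈ range (algebraMap K L) ↔ x ^ Fintype.card K = x := by
  rw [IsGalois.mem_range_algebraMap_iff_fixed]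
  refine ⟨fun h => ?_, fun hx σ => ?_⟩
  · rw [← frobeniusAlgEquivOfAlgebraic_apply, h]
  · obtain ⟨i, rfl⟩ := (bijective_frobeniusAlgEquivOfAlgebraic_pow K L).2 σ
    rw [AlgEquiv.coe_pow]
    exact iterate_fixed (by rw [frobeniusAlgEquivOfAlgebraic_apply, hx]) i

theorem add_inv_mem_range_algebraMap {u : L} (hu : PowEqSelfOrInv (Fintype.card K) u) :
    u + u⁻¹ ∈ range (algebraMap K L) := by
  rw [mem_range_algebraMap_iff_pow_card_eq, ← frobeniusAlgEquivOfAlgebraic_apply, map_add,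
    map_inv₀, frobeniusAlgEquivOfAlgebraic_apply]
  rcases hu with hu | hu <;> rw [hu]
  rw [inv_inv, add_comm]

theorem exists_powEqSelfOrInv_add_inv_eq (hL : 2 ∣ Module.finrank K L) (k : K) :
    ∃ u : L, u ≠ 0 ∧ PowEqSelfOrInv (Fintype.card K) u ∧ u + u⁻¹ = algebraMap K L k := by
  set f : K[X] := X ^ 2 - C k * X + 1
  have hroot : ∀ v : L, aeval v f = v ^ 2 - algebraMap K L k * v + 1 := fun v => by
    simp [f, Polynomial.aeval_C]
  obtain ⟨u, hu⟩ := exists_aeval_eq_zero_of_natDegree_eq_two hL (f := f) (by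
    simp only [f]; compute_degree!)
  rw [hroot] at hu
  have hinv : u⁻¹ = algebraMap K L k - u :=
    inv_eq_of_mul_eq_one_right (by linear_combination -hu)
  refine ⟨u, fun h => by simp [h] at hu, ?_, by rw [hinv]; ring⟩
  have huq : aeval (u ^ Fintype.card K) f = 0 := by
    rw [← frobeniusAlgEquivOfAlgebraic_apply, aeval_algHom_apply, hroot, hu, map_zero]
  rw [hroot] at huq
  have hfactor : (u ^ Fintype.card K - u) * (u ^ Fintype.card K - u⁻¹) = 0 := by
    rw [hinv]; linear_combination huq - hu
  rcases mul_eq_zero.1 hfactor with h | h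
  exacts [Or.inl (sub_eq_zero.1 h), Or.inr (sub_eq_zero.1 h)]

theorem exists_add_inv_parametrization (p : ℕ) [Fact p.Prime] [CharP K p]
    (hL : 2 ∣ Module.finrank K L) :
    ∃ g : Lˣ → K, (∀ u v, PowEqSelfOrInv (Fintype.card K) u → PowEqSelfOrInv (Fintype.card K) v →
        (g u = g v ↔ u = v ∨ u = v⁻¹)) ∧
      g '' {u | PowEqSelfOrInv (Fintype.card K) u} = univ ∧
      ∀ u, PowEqSelfOrInv (Fintype.card K) u → g (u ^ p) = g u ^ p := by
  have := charP_of_injective_algebraMap (algebraMap K L).injective p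
  have hA : ∀ u : Lˣ,
      PowEqSelfOrInv (Fintype.card K) u ↔ PowEqSelfOrInv (Fintype.card K) (u : L) := fun u =>
    (PowEqSelfOrInv.map_iff (f := Units.coeHom L) Units.val_injective).symm
  set ι := algebraMap K L
  let g : Lˣ → K := fun u => invFun ι (u + (u : L)⁻¹)
  have hg : ∀ u : Lˣ, PowEqSelfOrInv (Fintype.card K) u → ι (g u) = u + (u : L)⁻¹ :=
    fun u hu => invFun_eq (add_inv_mem_range_algebraMap ((hA u).1 hu))
  refine ⟨g, fun u v hu hv => ?_, eq_univ_of_forall fun k => ?_, fun u hu => ?_⟩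
  · rw [← ι.injective.eq_iff, hg u hu, hg v hv, add_inv_eq_add_inv_iff u.ne_zero v.ne_zero,
      Units.val_inj, ← Units.val_inv_eq_inv_val, Units.val_inj]
  · obtain ⟨u, hu0, hu, huk⟩ := exists_powEqSelfOrInv_add_inv_eq hL k
    refine ⟨Units.mk0 u hu0, (hA _).2 hu, ?_⟩
    simp only [g, Units.val_mk0, huk]
    exact leftInverse_invFun ι.injective k
  · apply ι.injective
    rw [map_pow, hg u hu, hg _ (PowEqSelfOrInv.pow hu p), Units.val_pow_eq_pow_val, add_pow_char,
      inv_pow]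

end FiniteField

open Polynomial.Chebyshev in
/-- There is a bijection `B` from the fixed points of the Chebyshev polynomial `T_{p^n}`
on `[−1,1]` to `F_{p^n}` such that `(B(y))^p = B(T_p(y))` for every such fixed point. -/
theorem exists_bijection_chebyshev_fixedPoints (p n : ℕ) [Fact p.Prime] (hn : 1 ≤ n) :
    ∃ B : ℝ → GaloisField p n,
      Set.BijOn B {y ∈ Set.Icc (-1 : ℝ) 1 | (T ℝ (p ^ n : ℕ)).eval y = y} Set.univ ∧
      ∀ y ∈ {y ∈ Set.Icc (-1 : ℝ) 1 | (T ℝ (p ^ n : ℕ)).eval y = y},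
        B y ^ p = B ((T ℝ p).eval y) := by
  let K := GaloisField p n
  let L := FiniteField.Extension K p 2
  have := Fintype.ofFinite K
  have hK : Fintype.card K = p ^ n := by
    rw [Fintype.card_eq_nat_card, GaloisField.card p n (by omega)]
  have hL : Nat.card Lˣ = (p ^ n) ^ 2 - 1 := by
    rw [Nat.card_units, FiniteField.natCard_extension, ← hK, Fintype.card_eq_nat_card]
  obtain ⟨f, hf_eq, hf_image, hf_T⟩ := IsCyclic.exists_chebyshev_parametrization hL
  obtain ⟨g, hg_eq, hg_image, hg_pow⟩ := FiniteField.exists_add_inv_parametrization (L := L) p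
    (by rw [FiniteField.finrank_extension])
  rw [hK] at hg_eq hg_image hg_pow
  obtain ⟨B, hB, hBfg⟩ := exists_bijOn_image_of_eq_iff_eq
    fun u hu v hv => (hf_eq u v).trans (hg_eq u v hu hv).symm
  refine ⟨B, hf_image ▸ hg_image ▸ hB, ?_⟩
  rw [← hf_image]
  rintro _ ⟨u, hu, rfl⟩
  rw [hf_T, hBfg u hu, hBfg _ (hu.pow p), hg_pow u hu]
end

section
/- Let p ≥ 2 and n ≥ 1 be integers and set N = p^n. The set of fixed points of the Chebyshev polynomial T_N in [−1,1], i.e. {y ∈ [−1,1] : T_N(y) = y}, equals {cos(k·π/(N − 1)) : 0 ≤ k < N, k even} ∪ {cos((k+1)·π/(N + 1)) : 0 ≤ k < N, k odd}, and this set has exactly N elements. -/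
open Real Polynomial.Chebyshev

/-- The angle whose cosine is the `k`-th fixed point of `T_N` on `[-1,1]`. -/
noncomputable def chebAngle (N k : ℕ) : ℝ :=
  if Even k then (k : ℝ) * Real.pi / ((N : ℝ) - 1)
  else ((k : ℝ) + 1) * Real.pi / ((N : ℝ) + 1)

theorem cheb_aux (N : ℕ) (hN : 2 ≤ N) :
    {y ∈ Set.Icc (-1 : ℝ) 1 | (T ℝ (N : ℕ)).eval y = y}
      = ({y | ∃ k < N, Even k ∧ y = cos ((k : ℝ) * π / ((N : ℝ) - 1))}
        ∪ {y | ∃ k < N, Odd k ∧ y = cos (((k : ℝ) + 1) * π / ((N : ℝ) + 1))}) ∧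
    {y ∈ Set.Icc (-1 : ℝ) 1 | (T ℝ (N : ℕ)).eval y = y}.ncard = N := by
  have hπ : (0:ℝ) < π := pi_pos
  have hNR : (2:ℝ) ≤ (N:ℝ) := by exact_mod_cast hN
  have hm : (0:ℝ) < (N:ℝ) - 1 := by linarith
  have hp' : (0:ℝ) < (N:ℝ) + 1 := by linarith
  -- the angles lie in [0, π]
  have hmem : ∀ k < N, chebAngle N k ∈ Set.Icc 0 π := by
    intro k hk
    have hkR : (k:ℝ) + 1 ≤ (N:ℝ) := by exact_mod_cast hk
    unfold chebAngle
    split_ifs with h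
    · refine ⟨by positivity, ?_⟩
      rw [div_le_iff₀ hm]
      nlinarith
    · refine ⟨by positivity, ?_⟩
      rw [div_le_iff₀ hp']
      nlinarith
  -- each cos (chebAngle N k) is a fixed point
  have hfix : ∀ k : ℕ, (T ℝ (N : ℕ)).eval (cos (chebAngle N k)) = cos (chebAngle N k) := by
    intro k
    rw [Polynomial.Chebyshev.T_real_cos]
    push_cast
    unfold chebAngle
    split_ifs with h
    · obtain ⟨a, ha⟩ := h
      have hk2 : (k:ℝ) = 2 * (a:ℝ) := by rw [ha]; push_cast; ring
      have key : (N:ℝ) * ((k:ℝ) * π / ((N:ℝ) - 1))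
          = (k:ℝ) * π / ((N:ℝ) - 1) + (a:ℝ) * (2 * π) := by
        rw [hk2]; field_simp; ring
      have hc := Real.cos_add_int_mul_two_pi ((k:ℝ) * π / ((N:ℝ) - 1)) (a:ℤ)
      push_cast at hc
      rw [key, hc]
    · obtain ⟨b, hb⟩ := Nat.odd_iff.mpr (Nat.not_even_iff.mp h)
      have hk2 : (k:ℝ) = 2 * (b:ℝ) + 1 := by rw [hb]; push_cast; ring
      have key : (N:ℝ) * (((k:ℝ) + 1) * π / ((N:ℝ) + 1))
          = ((b:ℝ) + 1) * (2 * π) - ((k:ℝ) + 1) * π / ((N:ℝ) + 1) := by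
        rw [hk2]; field_simp; ring
      have hc := Real.cos_int_mul_two_pi_sub (((k:ℝ) + 1) * π / ((N:ℝ) + 1)) ((b:ℤ) + 1)
      push_cast at hc
      rw [key, hc]
  -- the fixed point set is the image of chebAngle composed with cos
  have himage : {y ∈ Set.Icc (-1 : ℝ) 1 | (T ℝ (N : ℕ)).eval y = y}
      = (fun k => cos (chebAngle N k)) '' Set.Iio N := by
    ext y
    simp only [Set.mem_setOf_eq, Set.mem_image, Set.mem_Iio, Set.mem_Icc]
    constructor
    · rintro ⟨⟨hy1, hy2⟩, hT⟩
      set x := Real.arccos y with hxdef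
      have hx0 : 0 ≤ x := Real.arccos_nonneg y
      have hxπ : x ≤ π := Real.arccos_le_pi y
      have hyx : cos x = y := Real.cos_arccos hy1 hy2
      have h1 : (T ℝ (N : ℕ)).eval y = cos ((N:ℝ) * x) := by
        rw [← hyx, Polynomial.Chebyshev.T_real_cos]
        norm_cast
      have hcos : cos ((N:ℝ) * x) = cos x := by
        rw [← h1, hT]; exact hyx.symm
      rcases Real.cos_eq_cos_iff.mp hcos with ⟨m, hm1 | hm1⟩
      · -- x = 2mπ + Nx  →  x = 2(-m)π/(N-1)
        have heq : x * ((N:ℝ) - 1) = 2 * (-(m:ℝ)) * π := by linear_combination -hm1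
        have ha0 : (0:ℝ) ≤ -(m:ℝ) := by nlinarith [mul_nonneg hx0 hm.le]
        have ha0' : 0 ≤ -m := by exact_mod_cast ha0
        set a : ℕ := (-m).toNat with hadef
        have haR : (a:ℝ) = -(m:ℝ) := by
          rw [hadef]; exact_mod_cast Int.toNat_of_nonneg ha0'
        have hbound : 2 * (a:ℝ) ≤ (N:ℝ) - 1 := by nlinarith [heq, haR]
        refine ⟨2 * a, ?_, ?_⟩
        · have : (2 * a : ℝ) < (N:ℝ) := by push_cast; linarith
          exact_mod_cast this
        · have hxx : x = ((2 * a : ℕ):ℝ) * π / ((N:ℝ) - 1) := by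
            rw [eq_div_iff hm.ne']
            push_cast
            linear_combination heq - 2 * π * haR
          have he : Even (2 * a) := ⟨a, two_mul a⟩
          rw [chebAngle, if_pos he, ← hxx, hyx]
      · -- x = 2mπ - Nx  →  x = 2mπ/(N+1)
        have heq : x * ((N:ℝ) + 1) = 2 * (m:ℝ) * π := by linear_combination hm1
        have hm0R : (0:ℝ) ≤ (m:ℝ) := by nlinarith [mul_nonneg hx0 hp'.le]
        have hm0 : 0 ≤ m := by exact_mod_cast hm0R
        set c : ℕ := 2 * m.toNat with hcdef
        have hcR : (c:ℝ) = 2 * (m:ℝ) := by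
          have htn : ((m.toNat : ℕ):ℝ) = (m:ℝ) := by exact_mod_cast Int.toNat_of_nonneg hm0
          rw [hcdef]; push_cast [htn]; ring
        have hcbound : (c:ℝ) ≤ (N:ℝ) + 1 := by nlinarith [heq, hcR]
        have hcboundN : c ≤ N + 1 := by exact_mod_cast hcbound
        have hxx : x = (c:ℝ) * π / ((N:ℝ) + 1) := by
          rw [eq_div_iff hp'.ne']
          linear_combination heq - π * hcR
        by_cases hc0 : c = 0
        · -- x = 0, y = 1 : use k = 0
          refine ⟨0, by omega, ?_⟩
          have hx0' : x = 0 := by rw [hxx, hc0]; simp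
          rw [chebAngle, if_pos Even.zero]
          simp only [Nat.cast_zero, zero_mul, zero_div, Real.cos_zero]
          rw [← hyx, hx0', Real.cos_zero]
        · by_cases hcN : c = N + 1
          · -- x = π, y = -1, N odd : use k = N - 1
            refine ⟨N - 1, by omega, ?_⟩
            have hxπ' : x = π := by
              rw [hxx, hcN]
              push_cast
              rw [mul_comm, mul_div_assoc, div_self hp'.ne', mul_one]
            have hNe : Even (N - 1) := by
              rw [Nat.even_iff]; omega
            rw [chebAngle, if_pos hNe]
            have hcast : ((N - 1 : ℕ):ℝ) = (N:ℝ) - 1 := by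
              have h1 : 1 ≤ N := by omega
              push_cast [Nat.cast_sub h1]
              ring
            rw [hcast, mul_comm, mul_div_assoc, div_self hm.ne', mul_one, ← hyx, hxπ']
          · -- 1 ≤ c ≤ N : use k = c - 1
            refine ⟨c - 1, by omega, ?_⟩
            have hko : Odd (c - 1) := by
              refine Nat.odd_iff.mpr ?_
              omega
            rw [chebAngle, if_neg (by rw [Nat.even_iff]; rw [Nat.odd_iff] at hko; omega)]
            have hc1 : ((c - 1 : ℕ):ℝ) + 1 = (c:ℝ) := by
              have : 1 ≤ c := by omega
              push_cast [Nat.cast_sub this]; ring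
            rw [hc1, ← hxx, hyx]
    · rintro ⟨k, hk, rfl⟩
      exact ⟨⟨neg_one_le_cos _, cos_le_one _⟩, hfix k⟩
  -- the union equals the same image
  have hunion : ({y | ∃ k < N, Even k ∧ y = cos ((k : ℝ) * π / ((N : ℝ) - 1))}
        ∪ {y | ∃ k < N, Odd k ∧ y = cos (((k : ℝ) + 1) * π / ((N : ℝ) + 1))})
      = (fun k => cos (chebAngle N k)) '' Set.Iio N := by
    ext y
    simp only [Set.mem_union, Set.mem_setOf_eq, Set.mem_image, Set.mem_Iio]
    constructor
    · rintro (⟨k, hk, hke, rfl⟩ | ⟨k, hk, hko, rfl⟩)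
      · exact ⟨k, hk, by rw [chebAngle, if_pos hke]⟩
      · refine ⟨k, hk, ?_⟩
        rw [chebAngle, if_neg (by rw [Nat.even_iff]; rw [Nat.odd_iff] at hko; omega)]
    · rintro ⟨k, hk, rfl⟩
      by_cases h : Even k
      · exact Or.inl ⟨k, hk, h, by rw [chebAngle, if_pos h]⟩
      · refine Or.inr ⟨k, hk, Nat.odd_iff.mpr (Nat.not_even_iff.mp h), ?_⟩
        rw [chebAngle, if_neg h]
  -- a mixed (even/odd) coincidence of angles is impossible
  have hmix : ∀ j k : ℕ, j < N → k < N → Even j → Odd k →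
      chebAngle N j ≠ chebAngle N k := by
    intro j k hj hk hje hko heq
    rw [chebAngle, chebAngle, if_pos hje,
      if_neg (by rw [Nat.even_iff]; rw [Nat.odd_iff] at hko; omega)] at heq
    rw [div_eq_div_iff hm.ne' hp'.ne'] at heq
    have hR : (j:ℝ) * ((N:ℝ) + 1) = ((k:ℝ) + 1) * ((N:ℝ) - 1) := by
      apply mul_right_cancel₀ Real.pi_ne_zero
      linear_combination heq
    have hZ : (j:ℤ) * ((N:ℤ) + 1) = ((k:ℤ) + 1) * ((N:ℤ) - 1) := by
      exact_mod_cast hR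
    have hkZ : (k:ℤ) < (N:ℤ) := by exact_mod_cast hk
    have hNZ : (2:ℤ) ≤ (N:ℤ) := by exact_mod_cast hN
    have hjN : (j:ℤ) < (N:ℤ) - 1 := by nlinarith
    have ht : 2 * (j:ℤ) = ((k:ℤ) + 1 - (j:ℤ)) * ((N:ℤ) - 1) := by
      linear_combination hZ
    have ht0 : 0 ≤ (k:ℤ) + 1 - (j:ℤ) := by nlinarith
    have ht1 : (k:ℤ) + 1 - (j:ℤ) ≤ 1 := by nlinarith
    have hcase : (k:ℤ) + 1 - (j:ℤ) = 0 ∨ (k:ℤ) + 1 - (j:ℤ) = 1 := by omega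
    rcases hcase with h0 | h1
    · rw [h0, zero_mul] at ht
      omega
    · have hjk : j = k := by omega
      rw [Nat.even_iff] at hje
      rw [Nat.odd_iff] at hko
      omega
  -- injectivity
  have hinj : Set.InjOn (fun k => cos (chebAngle N k)) (Set.Iio N) := by
    intro j hj k hk h
    have hθ : chebAngle N j = chebAngle N k :=
      Real.injOn_cos (hmem j hj) (hmem k hk) h
    by_cases hje : Even j <;> by_cases hke : Even k
    · rw [chebAngle, chebAngle, if_pos hje, if_pos hke,
        div_eq_div_iff hm.ne' hm.ne'] at hθ
      have : (j:ℝ) = (k:ℝ) := by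
        apply mul_right_cancel₀ (mul_pos hπ hm).ne'
        linear_combination hθ
      exact_mod_cast this
    · exact absurd hθ (hmix j k hj hk hje (Nat.odd_iff.mpr (Nat.not_even_iff.mp hke)))
    · exact absurd hθ.symm (hmix k j hk hj hke (Nat.odd_iff.mpr (Nat.not_even_iff.mp hje)))
    · rw [chebAngle, chebAngle, if_neg hje, if_neg hke,
        div_eq_div_iff hp'.ne' hp'.ne'] at hθ
      have : (j:ℝ) + 1 = (k:ℝ) + 1 := by
        apply mul_right_cancel₀ (mul_pos hπ hp').ne'
        linear_combination hθ
      have : (j:ℝ) = (k:ℝ) := by linarith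
      exact_mod_cast this
  refine ⟨himage.trans hunion.symm, ?_⟩
  rw [himage, Set.ncard_image_of_injOn hinj, ← Finset.coe_range,
    Set.ncard_coe_finset, Finset.card_range]

open Real Polynomial.Chebyshev in
/-- For `N = p^n`, the set of fixed points of the Chebyshev polynomial `T_N` in `[−1,1]`
is `{cos(k·π/(N − 1)) : 0 ≤ k < N, k even} ∪ {cos((k+1)·π/(N + 1)) : 0 ≤ k < N, k odd}`,
and it has exactly `N` elements. -/
theorem chebyshev_fixedPoints (p n : ℕ) (hp : 2 ≤ p) (hn : 1 ≤ n) :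
    {y ∈ Set.Icc (-1 : ℝ) 1 | (T ℝ (p ^ n : ℕ)).eval y = y}
      = ({y | ∃ k < p ^ n, Even k ∧ y = cos ((k : ℝ) * π / ((p : ℝ) ^ n - 1))}
        ∪ {y | ∃ k < p ^ n, Odd k ∧ y = cos (((k : ℝ) + 1) * π / ((p : ℝ) ^ n + 1))}) ∧
    {y ∈ Set.Icc (-1 : ℝ) 1 | (T ℝ (p ^ n : ℕ)).eval y = y}.ncard = p ^ n := by
  have h2 : 2 ≤ p ^ n := by
    calc 2 = 2 ^ 1 := (pow_one 2).symm
    _ ≤ 2 ^ n := Nat.pow_le_pow_right (by norm_num) hn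
    _ ≤ p ^ n := Nat.pow_le_pow_left hp n
  have h := cheb_aux (p ^ n) h2
  exact_mod_cast h
end
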